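/- arXiv:1908.00346 — 7 statements merged into one kernel-verified Lean document; each statement's English description precedes it below -/
import Mathlib

section
/- Let ℓ > 0 and let g : [0,∞) → [0,∞] be measurable. Then ∫_{a ∈ ℝ×(0,∞)} ∫_{b ∈ D(ℓ,a)} g(|a−b|) db da = 2ℓ ∫_0^∞ r² g(r) dr, where for a point a in the open upper half-plane, D(ℓ,a) := { b ∈ ℝ² : the segment [a,b] meets the segment [(0,0),(ℓ,0)] }, and both outer integrals are with respect to Lebesgue measure on ℝ². -/
open MeasureTheory Set Real
open scoped ENNReal

local notation "ℝ²" => EuclideanSpace ℝ (Fin 2)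

/-!
Write `b = a + w`. For a fixed displacement `w`, the starting points `a` in the upper half-plane
for which `[a, a + w]` meets `[0, ℓ e₀]` form a parallelogram of base `ℓ` and height `(-w₁)⁺`, so
by Tonelli the left side is `ℓ ∫ (-w₁)⁺ g(‖w‖) dw`. In polar coordinates this factors as
`ℓ ∫₀^∞ r² g(r) dr · ∫_{-π}^{π} (-sin θ)⁺ dθ`, and the angular integral is `2`.
-/

lemma lintegral_setLIntegral_preimage_prodMk {α β : Type*} [MeasurableSpace α]
    [MeasurableSpace β] {μ : Measure α} {ν : Measure β} [SFinite μ] [SFinite ν]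
    {s : Set (α × β)} (hs : MeasurableSet s) {f : β → ℝ≥0∞} (hf : Measurable f) :
    ∫⁻ a, ∫⁻ b in Prod.mk a ⁻¹' s, f b ∂ν ∂μ = ∫⁻ b, f b * μ ((·, b) ⁻¹' s) ∂ν := by
  have hF : Measurable (s.indicator (f ∘ Prod.snd)) := (hf.comp measurable_snd).indicator hs
  calc _ = ∫⁻ a, ∫⁻ b, s.indicator (f ∘ Prod.snd) (a, b) ∂ν ∂μ := by
        congr! 2 with a
        rw [← lintegral_indicator (measurable_prodMk_left hs)]
        rfl
    _ = ∫⁻ b, ∫⁻ a, s.indicator (f ∘ Prod.snd) (a, b) ∂μ ∂ν :=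
        lintegral_lintegral_swap hF.aemeasurable
    _ = ∫⁻ b, f b * μ ((·, b) ⁻¹' s) ∂ν := by
        refine lintegral_congr fun b => ?_
        rw [← lintegral_indicator_const (measurable_prodMk_right hs)]
        rfl

lemma Real.lintegral_Ioo_ofReal_neg_sin : ∫⁻ θ in Ioo (-π) π, ENNReal.ofReal (-sin θ) = 2 := by
  have hsplit : Ioo (-π) π = Ioc (-π) 0 ∪ Ioo 0 π :=
    (Ioc_union_Ioo_eq_Ioo (by linarith [pi_pos]) pi_pos).symm
  have hupper : ∫⁻ θ in Ioo 0 π, ENNReal.ofReal (-sin θ) = 0 :=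
    setLIntegral_eq_zero measurableSet_Ioo fun θ hθ =>
      ENNReal.ofReal_eq_zero.2 (neg_nonpos.2 (sin_pos_of_pos_of_lt_pi hθ.1 hθ.2).le)
  rw [hsplit, lintegral_union measurableSet_Ioo
    (Ioc_disjoint_Ioi_same.mono_right Ioo_subset_Ioi_self), hupper, add_zero,
    ← ofReal_integral_eq_lintegral_ofReal]
  · rw [← intervalIntegral.integral_of_le (neg_nonpos.2 pi_pos.le),
      intervalIntegral.integral_neg, integral_sin]
    norm_num
  · exact continuous_sin.neg.integrableOn_Icc.mono_set Ioc_subset_Icc_self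
  · filter_upwards [ae_restrict_mem measurableSet_Ioc] with θ hθ
    exact neg_nonneg.2 (sin_nonpos_of_nonpos_of_neg_pi_le hθ.2 hθ.1.le)

lemma volume_parallelogram {ℓ : ℝ} (hℓ : 0 ≤ ℓ) (c k : ℝ) :
    volume {q : ℝ × ℝ | q.2 ∈ Ioc 0 c ∧ c * q.1 + k * q.2 ∈ Icc 0 (ℓ * c)} =
      ENNReal.ofReal (ℓ * c) := by
  set P := {q : ℝ × ℝ | q.2 ∈ Ioc 0 c ∧ c * q.1 + k * q.2 ∈ Icc 0 (ℓ * c)}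
  have hP : MeasurableSet P :=
    (measurableSet_Ioc.preimage measurable_snd).inter (measurableSet_Icc.preimage (by fun_prop))
  have hslice (y : ℝ) :
      volume ((·, y) ⁻¹' P) = (Ioc 0 c).indicator (fun _ => ENNReal.ofReal ℓ) y := by
    by_cases hy : y ∈ Ioc 0 c
    · have hc : 0 < c := hy.1.trans_le hy.2
      have : (·, y) ⁻¹' P = Icc (-(k * y) / c) ((ℓ * c - k * y) / c) := by
        ext x
        simp only [P, mem_preimage, mem_ofPred_eq, hy, true_and, mem_Icc, div_le_iff₀ hc,
          le_div_iff₀ hc]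
        constructor <;> rintro ⟨h1, h2⟩ <;> constructor <;> linarith
      rw [this, Real.volume_Icc, indicator_of_mem hy]
      congr 1
      field_simp
      ring
    · rw [indicator_of_notMem hy]
      convert measure_empty (μ := (volume : Measure ℝ))
      exact eq_empty_of_forall_notMem fun x hx => hy hx.1
  rw [Measure.volume_eq_prod, Measure.prod_apply_symm hP]
  simp_rw [hslice]
  rw [lintegral_indicator_const measurableSet_Ioc, Real.volume_Ioc, sub_zero,
    ENNReal.ofReal_mul hℓ]

def euclideanPlaneEquivProd : ℝ² ≃ᵐ ℝ × ℝ :=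
  (MeasurableEquiv.toLp 2 (Fin 2 → ℝ)).symm.trans MeasurableEquiv.finTwoArrow

lemma volume_preserving_euclideanPlaneEquivProd :
    MeasurePreserving euclideanPlaneEquivProd volume volume :=
  (volume_preserving_finTwoArrow ℝ).comp
    (EuclideanSpace.volume_preserving_symm_measurableEquiv_toLp (Fin 2))

lemma norm_euclideanPlaneEquivProd_symm (q : ℝ × ℝ) :
    ‖euclideanPlaneEquivProd.symm q‖ = √(q.1 ^ 2 + q.2 ^ 2) := by
  rw [EuclideanSpace.norm_eq, Fin.sum_univ_two]
  simp only [Real.norm_eq_abs, sq_abs]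
  rfl

lemma lintegral_ofReal_neg_apply_one_mul_norm {f : ℝ → ℝ≥0∞} (hf : Measurable f) :
    ∫⁻ w : ℝ², ENNReal.ofReal (-w 1) * f ‖w‖ =
      2 * ∫⁻ r in Ioi 0, ENNReal.ofReal (r ^ 2) * f r := by
  rw [← volume_preserving_euclideanPlaneEquivProd.symm.lintegral_comp_emb
    euclideanPlaneEquivProd.symm.measurableEmbedding, ← lintegral_comp_polarCoord_symm]
  simp only [norm_euclideanPlaneEquivProd_symm]
  calc _ = ∫⁻ p in Ioi 0 ×ˢ Ioo (-π) π,
          ENNReal.ofReal (p.1 ^ 2) * f p.1 * ENNReal.ofReal (-sin p.2) := by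
        refine setLIntegral_congr_fun polarCoord.open_target.measurableSet fun p hp => ?_
        obtain ⟨r, θ⟩ := p
        have hr : 0 < r := hp.1
        have hnorm : √((r * cos θ) ^ 2 + (r * sin θ) ^ 2) = r := by
          rw [show (r * cos θ) ^ 2 + (r * sin θ) ^ 2 = r ^ 2 by
            linear_combination r ^ 2 * cos_sq_add_sin_sq θ, Real.sqrt_sq hr.le]
        simp only [polarCoord_symm_apply, hnorm, smul_eq_mul]
        change ENNReal.ofReal r * (ENNReal.ofReal (-(r * sin θ)) * f r) = _
        rw [show -(r * sin θ) = r * -sin θ by ring, ENNReal.ofReal_mul hr.le, pow_two,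
          ENNReal.ofReal_mul hr.le]
        ring
    _ = (∫⁻ r in Ioi 0, ENNReal.ofReal (r ^ 2) * f r) *
          ∫⁻ θ in Ioo (-π) π, ENNReal.ofReal (-sin θ) := by
        rw [Measure.volume_eq_prod, ← Measure.prod_restrict]
        exact lintegral_prod_mul
          (by fun_prop : Measurable fun r : ℝ => ENNReal.ofReal (r ^ 2) * f r).aemeasurable
          (by fun_prop : Measurable fun θ => ENNReal.ofReal (-sin θ)).aemeasurable
    _ = 2 * ∫⁻ r in Ioi 0, ENNReal.ofReal (r ^ 2) * f r := by
        rw [Real.lintegral_Ioo_ofReal_neg_sin, mul_comm]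

lemma mem_segment_zero_single_iff {ℓ : ℝ} (hℓ : 0 ≤ ℓ) {z : ℝ²} :
    z ∈ segment ℝ 0 (EuclideanSpace.single 0 ℓ) ↔ z 1 = 0 ∧ z 0 ∈ Icc 0 ℓ := by
  let L : ℝ →ₗ[ℝ] ℝ² := LinearMap.toSpanSingleton ℝ ℝ² (EuclideanSpace.single 0 1)
  have hL (t : ℝ) : L t = EuclideanSpace.single 0 t := by
    ext i; fin_cases i <;> simp [L]
  have h := image_segment ℝ L.toAffineMap 0 ℓ
  simp only [LinearMap.coe_toAffineMap, map_zero] at h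
  simp only [hL, segment_eq_Icc hℓ] at h
  rw [← h]
  constructor
  · rintro ⟨t, ht, rfl⟩
    simpa using ht
  · rintro ⟨h1, h0⟩
    refine ⟨z 0, h0, ?_⟩
    ext i
    fin_cases i <;> simp [h1]

lemma EuclideanSpace.image_apply_segment {ι : Type*} [Fintype ι] (a b : EuclideanSpace ℝ ι)
    (i : ι) : (fun z : EuclideanSpace ℝ ι => z i) '' segment ℝ a b = uIcc (a i) (b i) := by
  rw [← segment_eq_uIcc]
  exact image_segment ℝ
    (EuclideanSpace.proj i : EuclideanSpace ℝ ι →L[ℝ] ℝ).toLinearMap.toAffineMap a b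

lemma sub_mul_apply_zero_of_mem_segment {a b z : ℝ²} (hz : z ∈ segment ℝ a b) (hz1 : z 1 = 0) :
    (a 1 - b 1) * z 0 = a 1 * b 0 - b 1 * a 0 := by
  obtain ⟨u, v, -, -, huv, rfl⟩ := hz
  simp only [PiLp.add_apply, PiLp.smul_apply, smul_eq_mul] at hz1 ⊢
  linear_combination (a 0 - b 0) * hz1 + (a 1 * b 0 - b 1 * a 0) * huv

/-- `(a, w)` stands for the segment from `a` to `a + w`; when it reaches the axis `y = 0`,
`a 1 * w 0 - w 1 * a 0` is `-w 1` times the abscissa of the crossing point. -/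
def crossingSet (ℓ : ℝ) : Set (ℝ² × ℝ²) :=
  {p | p.1 1 ∈ Ioc 0 (-p.2 1) ∧ p.1 1 * p.2 0 - p.2 1 * p.1 0 ∈ Icc 0 (ℓ * -p.2 1)}

lemma measurableSet_crossingSet (ℓ : ℝ) : MeasurableSet (crossingSet ℓ) := by
  unfold crossingSet
  measurability

lemma segment_inter_nonempty_iff_mem_crossingSet {ℓ : ℝ} (hℓ : 0 ≤ ℓ) {a : ℝ²} (ha : 0 < a 1)
    (w : ℝ²) :
    (segment ℝ a (a + w) ∩ segment ℝ 0 (EuclideanSpace.single 0 ℓ)).Nonempty ↔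
      (a, w) ∈ crossingSet ℓ := by
  have hcross {z : ℝ²} (hz : z ∈ segment ℝ a (a + w)) (hz1 : z 1 = 0) :
      -w 1 * z 0 = a 1 * w 0 - w 1 * a 0 := by
    have := sub_mul_apply_zero_of_mem_segment hz hz1
    simp only [PiLp.add_apply] at this
    linear_combination this
  have himage := EuclideanSpace.image_apply_segment a (a + w) 1
  simp only [PiLp.add_apply] at himage
  constructor
  · rintro ⟨z, hza, hz⟩
    obtain ⟨hz1, hz0, hz0ℓ⟩ := (mem_segment_zero_single_iff hℓ).1 hz
    have h0 : z 1 ∈ uIcc (a 1) (a 1 + w 1) := himage ▸ mem_image_of_mem _ hza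
    rw [hz1, mem_uIcc] at h0
    have hw : a 1 ≤ -w 1 := by rcases h0 with h | h <;> linarith
    have := hcross hza hz1
    exact ⟨⟨ha, hw⟩, by nlinarith, by nlinarith⟩
  · rintro ⟨⟨-, hw⟩, h0, hℓw⟩
    have h0' : (0 : ℝ) ∈ uIcc (a 1) (a 1 + w 1) := by
      rw [mem_uIcc]; right; constructor <;> linarith
    obtain ⟨z, hza, hz1⟩ := himage ▸ h0'
    have := hcross hza hz1
    have hw' : 0 < -w 1 := by linarith
    exact ⟨z, hza, (mem_segment_zero_single_iff hℓ).2 ⟨hz1, by nlinarith, by nlinarith⟩⟩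

lemma setLIntegral_segment_inter_nonempty {ℓ : ℝ} (hℓ : 0 ≤ ℓ) (f : ℝ → ℝ≥0∞) {a : ℝ²}
    (ha : 0 < a 1) :
    ∫⁻ b in {b : ℝ² | (segment ℝ a b ∩ segment ℝ 0 (EuclideanSpace.single 0 ℓ)).Nonempty},
        f (dist a b) =
      ∫⁻ w in Prod.mk a ⁻¹' crossingSet ℓ, f ‖w‖ := by
  have hpre : (a + ·) ⁻¹' {b : ℝ² |
      (segment ℝ a b ∩ segment ℝ 0 (EuclideanSpace.single 0 ℓ)).Nonempty} =
      Prod.mk a ⁻¹' crossingSet ℓ := by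
    ext w
    exact segment_inter_nonempty_iff_mem_crossingSet hℓ ha w
  rw [← hpre, ← (measurePreserving_add_left volume a).setLIntegral_comp_preimage_emb
    (measurableEmbedding_addLeft a)]
  simp only [dist_self_add_right]

/-- For `0 ≤ w 1` the slice is empty, and `ENNReal.ofReal` truncates `ℓ * -w 1 ≤ 0` to `0`. -/
lemma volume_preimage_prodMk_crossingSet {ℓ : ℝ} (hℓ : 0 ≤ ℓ) (w : ℝ²) :
    volume ((·, w) ⁻¹' crossingSet ℓ) = ENNReal.ofReal (ℓ * -w 1) := by
  have : (·, w) ⁻¹' crossingSet ℓ = euclideanPlaneEquivProd ⁻¹'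
      {q : ℝ × ℝ | q.2 ∈ Ioc 0 (-w 1) ∧ -w 1 * q.1 + w 0 * q.2 ∈ Icc 0 (ℓ * -w 1)} := by
    ext a
    simp only [crossingSet, mem_preimage, mem_ofPred_eq]
    rw [show a 1 * w 0 - w 1 * a 0 = -w 1 * a 0 + w 0 * a 1 by ring]
    rfl
  rw [this, volume_preserving_euclideanPlaneEquivProd.measure_preimage_equiv,
    volume_parallelogram hℓ]

/-- For `ℓ > 0` and measurable `g : [0,∞) → [0,∞]`,
`∫_{a ∈ ℝ×(0,∞)} ∫_{b ∈ D(ℓ,a)} g(|a−b|) db da = 2ℓ ∫_0^∞ r² g(r) dr`,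
where `D(ℓ,a)` is the set of `b ∈ ℝ²` such that the segment `[a,b]` meets the
segment from the origin to `(ℓ,0)`. -/
theorem stmt0 (ℓ : ℝ) (hℓ : 0 < ℓ) (g : ℝ → ℝ≥0∞) (hg : Measurable g) :
    ∫⁻ a in {a : EuclideanSpace ℝ (Fin 2) | 0 < a 1},
      ∫⁻ b in {b : EuclideanSpace ℝ (Fin 2) |
          (segment ℝ a b ∩ segment ℝ 0 (EuclideanSpace.single 0 ℓ)).Nonempty},
        g (dist a b) =
      ENNReal.ofReal (2 * ℓ) * ∫⁻ r in Set.Ioi (0 : ℝ), ENNReal.ofReal (r ^ 2) * g r := by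
  have hH : MeasurableSet {a : ℝ² | 0 < a 1} := measurableSet_lt measurable_const (by fun_prop)
  calc _ = ∫⁻ a in {a : ℝ² | 0 < a 1}, ∫⁻ w in Prod.mk a ⁻¹' crossingSet ℓ, g ‖w‖ :=
        setLIntegral_congr_fun hH fun a ha => setLIntegral_segment_inter_nonempty hℓ.le g ha
    _ = ∫⁻ a, ∫⁻ w in Prod.mk a ⁻¹' crossingSet ℓ, g ‖w‖ := by
        refine setLIntegral_eq_of_support_subset fun a ha => ?_
        by_contra hna
        have : Prod.mk a ⁻¹' crossingSet ℓ = ∅ :=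
          eq_empty_of_forall_notMem fun w hw => hna hw.1.1
        exact ha (by simp only [this, Measure.restrict_empty, lintegral_zero_measure])
    _ = ∫⁻ w, g ‖w‖ * volume ((·, w) ⁻¹' crossingSet ℓ) :=
        lintegral_setLIntegral_preimage_prodMk (measurableSet_crossingSet ℓ) (by fun_prop)
    _ = ENNReal.ofReal ℓ * ∫⁻ w : ℝ², ENNReal.ofReal (-w 1) * g ‖w‖ := by
        rw [← lintegral_const_mul _ (by fun_prop)]
        refine lintegral_congr fun w => ?_
        rw [volume_preimage_prodMk_crossingSet hℓ.le, ENNReal.ofReal_mul hℓ.le]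
        ring
    _ = _ := by
        rw [lintegral_ofReal_neg_apply_one_mul_norm hg, ENNReal.ofReal_mul zero_le_two,
          ENNReal.ofReal_ofNat, mul_left_comm, mul_assoc]
end

section
/- Let c > 3, t > 0 and τ ∈ (0,1]. There exists a constant C > 0, depending only on c, t and τ, such that for all s ≥ 1, ∫_{√2·t·s}^{∞} ( max( s^τ, R − √2·t·s ) )^{1−c} · R dR ≤ C ( s^{−τ(c−3)} + s^{1−τ(c−2)} ). -/
open MeasureTheory Set Real
open scoped ENNReal

/-!
Write `a = √2 t s` and `d = s ^ τ` and split the range of integration at `R = a + d`. On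
`(a, a + d]` the integrand is at most `d ^ (1 - c) (a + d)`, on an interval of length `d`.
Beyond `a + d` the substitution `u = R - a` turns the integrand into
`u ^ (1 - c) (u + a) = u ^ (2 - c) + a u ^ (1 - c)`, whose tails over `(d, ∞)` are
`d ^ (3 - c) / (c - 3)` and `a d ^ (2 - c) / (c - 2)`. In terms of `s` every term is a multiple of
`s ^ (-τ (c - 3))` or of `s ^ (1 - τ (c - 2))`.
-/

theorem lintegral_Ioi_rpow {p d : ℝ} (hp : p < -1) (hd : 0 < d) :
    ∫⁻ u in Ioi d, ENNReal.ofReal (u ^ p) = ENNReal.ofReal (d ^ (p + 1) / -(p + 1)) := by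
  rw [← ofReal_integral_eq_lintegral_ofReal (integrableOn_Ioi_rpow_of_lt hp hd)
      ((ae_restrict_iff' measurableSet_Ioi).mpr
        (.of_forall fun u hu => rpow_nonneg (hd.trans hu).le p)),
    integral_Ioi_rpow_of_lt hp hd, neg_div, div_neg]

section ShiftedTail

variable {a d p : ℝ}

theorem lintegral_Ioc_max_rpow_mul_le (ha : 0 ≤ a) (hd : 0 < d) (hp : p ≤ 0) :
    ∫⁻ R in Ioc a (a + d), ENNReal.ofReal (max d (R - a) ^ p * R)
      ≤ ENNReal.ofReal (d ^ (p + 1) * (a + d)) :=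
  calc ∫⁻ R in Ioc a (a + d), ENNReal.ofReal (max d (R - a) ^ p * R)
      ≤ ∫⁻ _ in Ioc a (a + d), ENNReal.ofReal (d ^ p * (a + d)) :=
        setLIntegral_mono' measurableSet_Ioc fun R hR => ENNReal.ofReal_le_ofReal <|
          mul_le_mul (rpow_le_rpow_of_nonpos hd (le_max_left _ _) hp) hR.2 (ha.trans hR.1.le)
            (rpow_nonneg hd.le _)
    _ = ENNReal.ofReal (d ^ (p + 1) * (a + d)) := by
        rw [setLIntegral_const, volume_Ioc, add_sub_cancel_left,
          ← ENNReal.ofReal_mul (by positivity), rpow_add_one hd.ne']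
        ring_nf

theorem lintegral_Ioi_max_rpow_mul (ha : 0 ≤ a) (hd : 0 < d) (hp : p < -2) :
    ∫⁻ R in Ioi (a + d), ENNReal.ofReal (max d (R - a) ^ p * R)
      = ENNReal.ofReal (d ^ (p + 2) / -(p + 2) + a * (d ^ (p + 1) / -(p + 1))) := by
  calc ∫⁻ R in Ioi (a + d), ENNReal.ofReal (max d (R - a) ^ p * R)
      = ∫⁻ R in Ioi (a + d), ENNReal.ofReal ((R - a) ^ p * ((R - a) + a)) :=
        setLIntegral_congr_fun measurableSet_Ioi fun R hR => by
          rw [max_eq_right (by linarith [mem_Ioi.1 hR]), sub_add_cancel]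
    _ = ∫⁻ u in Ioi d, ENNReal.ofReal (u ^ p * (u + a)) := by
        rw [add_comm a d, ← preimage_sub_const_Ioi]
        exact (measurePreserving_sub_right volume a).setLIntegral_comp_preimage measurableSet_Ioi
          (f := fun u => ENNReal.ofReal (u ^ p * (u + a))) (by fun_prop)
    _ = ∫⁻ u in Ioi d,
          (ENNReal.ofReal (u ^ (p + 1)) + ENNReal.ofReal a * ENNReal.ofReal (u ^ p)) :=
        setLIntegral_congr_fun measurableSet_Ioi fun u hu => by
          have hu : 0 < u := hd.trans hu
          rw [← ENNReal.ofReal_mul ha, ← ENNReal.ofReal_add (by positivity) (by positivity),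
            rpow_add_one hu.ne']
          ring_nf
    _ = _ := by
        rw [lintegral_add_left (by fun_prop), lintegral_const_mul' _ _ ENNReal.ofReal_ne_top,
          lintegral_Ioi_rpow (by linarith) hd, lintegral_Ioi_rpow (by linarith) hd,
          ← ENNReal.ofReal_mul ha, ← ENNReal.ofReal_add, add_assoc p 1 1, one_add_one_eq_two]
        · exact div_nonneg (rpow_nonneg hd.le _) (by linarith)
        · exact mul_nonneg ha (div_nonneg (rpow_nonneg hd.le _) (by linarith))

theorem lintegral_Ioi_max_rpow_mul_le (ha : 0 ≤ a) (hd : 0 < d) (hp : p < -2) :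
    ∫⁻ R in Ioi a, ENNReal.ofReal (max d (R - a) ^ p * R)
      ≤ ENNReal.ofReal (d ^ (p + 1) * (a + d) + d ^ (p + 2) / -(p + 2)
          + a * (d ^ (p + 1) / -(p + 1))) := by
  rw [← Ioc_union_Ioi_eq_Ioi (le_add_of_nonneg_right hd.le),
    lintegral_union measurableSet_Ioi Ioc_disjoint_Ioi_same, lintegral_Ioi_max_rpow_mul ha hd hp,
    add_assoc, ENNReal.ofReal_add (by positivity)
      (add_nonneg (div_nonneg (rpow_nonneg hd.le _) (by linarith))
        (mul_nonneg ha (div_nonneg (rpow_nonneg hd.le _) (by linarith))))]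
  gcongr
  exact lintegral_Ioc_max_rpow_mul_le ha hd (by linarith)

end ShiftedTail

theorem stmt4_general (c t τ : ℝ) (hc : 3 < c) (ht : 0 < t) :
    ∃ C : ℝ, 0 < C ∧ ∀ s : ℝ, 1 ≤ s →
      ∫⁻ R in Set.Ioi (Real.sqrt 2 * t * s),
          ENNReal.ofReal ((max (s ^ τ) (R - Real.sqrt 2 * t * s)) ^ (1 - c) * R) ≤
        ENNReal.ofReal (C * (s ^ (-(τ * (c - 3))) + s ^ (1 - τ * (c - 2)))) := by
  have hc3 : 0 < c - 3 := by linarith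
  have hc2 : 0 < c - 2 := by linarith
  refine ⟨1 + 1 / (c - 3) + √2 * t * (1 + 1 / (c - 2)), by positivity, fun s hs => ?_⟩
  have hs0 : 0 < s := one_pos.trans_le hs
  refine (lintegral_Ioi_max_rpow_mul_le (by positivity) (rpow_pos_of_pos hs0 τ)
    (by linarith)).trans (ENNReal.ofReal_le_ofReal ?_)
  have hpow : (s ^ τ) ^ (1 - c + 2) = (s ^ τ) ^ (1 - c + 1) * s ^ τ := by
    rw [← rpow_add_one (rpow_pos_of_pos hs0 τ).ne']; ring_nf
  have hX : (s ^ τ) ^ (1 - c + 1) * s ^ τ = s ^ (-(τ * (c - 3))) := by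
    rw [← hpow, ← rpow_mul hs0.le]; ring_nf
  have hY : s * (s ^ τ) ^ (1 - c + 1) = s ^ (1 - τ * (c - 2)) := by
    rw [← rpow_mul hs0.le, mul_comm s, ← rpow_add_one hs0.ne']; ring_nf
  have hX0 := rpow_nonneg hs0.le (-(τ * (c - 3)))
  have hY0 := rpow_nonneg hs0.le (1 - τ * (c - 2))
  calc _ = (1 + 1 / (c - 3)) * ((s ^ τ) ^ (1 - c + 1) * s ^ τ)
        + √2 * t * (1 + 1 / (c - 2)) * (s * (s ^ τ) ^ (1 - c + 1)) := by
        rw [hpow]; ring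
    _ ≤ _ := by
        rw [hX, hY]
        linarith [mul_nonneg (by positivity : 0 ≤ √2 * t * (1 + 1 / (c - 2))) hX0,
          mul_nonneg (by positivity : (0 : ℝ) ≤ 1 + 1 / (c - 3)) hY0]

/-- For `c > 3`, `t > 0`, `τ ∈ (0,1]`, there is a constant `C > 0`
such that for all `s ≥ 1`,
`∫_{√2·t·s}^{∞} (max(s^τ, R − √2·t·s))^{1−c} · R dR ≤ C (s^{−τ(c−3)} + s^{1−τ(c−2)})`. -/
theorem stmt4 (c t τ : ℝ) (hc : 3 < c) (ht : 0 < t) (hτ : τ ∈ Set.Ioc (0 : ℝ) 1) :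
    ∃ C : ℝ, 0 < C ∧ ∀ s : ℝ, 1 ≤ s →
      ∫⁻ R in Set.Ioi (Real.sqrt 2 * t * s),
          ENNReal.ofReal ((max (s ^ τ) (R - Real.sqrt 2 * t * s)) ^ (1 - c) * R) ≤
        ENNReal.ofReal (C * (s ^ (-(τ * (c - 3))) + s ^ (1 - τ * (c - 2)))) :=
  stmt4_general c t τ hc ht
end

section
/- Suppose β > 0 with β ≠ 1, and let α > 0 and η > 0. Then there exist constants C₁, C₂, C₃ ≥ 0 (depending only on α, β, η) such that for every real r > max(1, η^{1/α}), E[ 1 − exp( − η W₁ W₂ / r^α ) ] ≤ C₁ r^{−α} + C₂ r^{−αβ} log r + C₃ r^{−αβ}. -/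
/-!
Since `1 - e^{-x} ≤ min 1 x` for `x ≥ 0`, the expectation is governed by truncated moments of the
Pareto law; write `c = η r^{-α}`.

* If `β > 1`, then `E W = β / (β - 1)` is finite and `1 - e^{-x} ≤ x` gives the bound
  `c (E W)² = η (β / (β - 1))² r^{-α}`.
* If `β < 1`, integrating out `W₂` first gives `E[1 - e^{-a W₂}] ≤ a^β / (1 - β)` for every `a > 0`
  (use `1 - e^{-x} ≤ x` below `w = 1/a` and `1 - e^{-x} ≤ 1` above it). Integrating the resulting
  bound `(c w)^β / (1 - β)` against the density `β w^{-β-1}` up to `T = r^α` contributes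
  `β c^β log T / (1 - β)`, and the tail `P(W₁ > T) = T^{-β}` contributes `r^{-αβ}`.
-/

open MeasureTheory Set Real
open scoped ENNReal

noncomputable def pareto (β : ℝ) : Measure ℝ :=
  volume.withDensity (Set.indicator (Set.Ici 1) fun w => ENNReal.ofReal (β * w ^ (-β - 1)))

namespace Pareto

variable {β : ℝ}

lemma pareto_eq_paretoMeasure (β : ℝ) : pareto β = ProbabilityTheory.paretoMeasure 1 β := by
  unfold pareto ProbabilityTheory.paretoMeasure
  congr 1 with w
  rw [ProbabilityTheory.paretoPDF_eq]
  by_cases h : (1 : ℝ) ≤ w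
  · simp [h, show -(β + 1) = -β - 1 by ring]
  · simp [h]

lemma isProbabilityMeasure_pareto (hβ : 0 < β) : IsProbabilityMeasure (pareto β) := by
  rw [pareto_eq_paretoMeasure]
  exact ProbabilityTheory.isProbabilityMeasure_paretoMeasure one_pos hβ

lemma pareto_eq_withDensity_restrict (β : ℝ) :
    pareto β = (volume.restrict (Ici 1)).withDensity fun w => ENNReal.ofReal (β * w ^ (-β - 1)) :=
  withDensity_indicator measurableSet_Ici _

lemma ae_one_le_pareto (β : ℝ) : ∀ᵐ w ∂pareto β, 1 ≤ w := by
  rw [pareto_eq_withDensity_restrict]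
  exact (withDensity_absolutelyContinuous _ _).ae_le (ae_restrict_mem measurableSet_Ici)

lemma ae_one_le_pareto_prod (hβ : 0 < β) :
    ∀ᵐ p ∂(pareto β).prod (pareto β), 1 ≤ p.1 ∧ 1 ≤ p.2 := by
  have := isProbabilityMeasure_pareto hβ
  refine (Measure.ae_prod_iff_ae_ae (by measurability)).2 ?_
  filter_upwards [ae_one_le_pareto β] with x hx
  filter_upwards [ae_one_le_pareto β] with y hy
  exact ⟨hx, hy⟩

lemma integral_pareto (hβ : 0 < β) (g : ℝ → ℝ) :
    ∫ w, g w ∂pareto β = ∫ w in Ici 1, β * w ^ (-β - 1) * g w := by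
  rw [pareto_eq_withDensity_restrict, integral_withDensity_eq_integral_toReal_smul (by fun_prop)
    (ae_of_all _ fun _ => ENNReal.ofReal_lt_top)]
  refine setIntegral_congr_fun measurableSet_Ici fun w hw => ?_
  have : 0 < w := zero_lt_one.trans_le hw
  rw [ENNReal.toReal_ofReal (by positivity), smul_eq_mul]

lemma integrableOn_pareto_density (hβ : 0 < β) {T : ℝ} (hT : 0 < T) :
    IntegrableOn (fun w => β * w ^ (-β - 1)) (Ioi T) :=
  (integrableOn_Ioi_rpow_of_lt (by linarith) hT).const_mul β

lemma integral_Ioi_pareto_density (hβ : 0 < β) {T : ℝ} (hT : 0 < T) :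
    ∫ w in Ioi T, β * w ^ (-β - 1) = T ^ (-β) := by
  rw [integral_const_mul, integral_Ioi_rpow_of_lt (by linarith) hT, sub_add_cancel]
  field_simp

lemma integrableOn_pareto_density_mul (hβ : 0 < β) {h : ℝ → ℝ} (hm : Measurable h)
    (h0 : ∀ w, 1 ≤ w → 0 ≤ h w) (h1 : ∀ w, 1 ≤ w → h w ≤ 1) :
    IntegrableOn (fun w => β * w ^ (-β - 1) * h w) (Ici 1) := by
  rw [integrableOn_Ici_iff_integrableOn_Ioi]
  refine (integrableOn_pareto_density hβ one_pos).mono' (by fun_prop)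
    ((ae_restrict_iff' measurableSet_Ioi).2 (ae_of_all _ fun w (hw : 1 < w) => ?_))
  have : 0 < w := one_pos.trans hw
  rw [norm_mul, norm_of_nonneg (by positivity), norm_of_nonneg (h0 w hw.le)]
  exact mul_le_of_le_one_right (by positivity) (h1 w hw.le)

lemma integral_pareto_le_of_le_rpow (hβ : 0 < β) {h : ℝ → ℝ} (hm : Measurable h)
    (h0 : ∀ w, 1 ≤ w → 0 ≤ h w) (h1 : ∀ w, 1 ≤ w → h w ≤ 1) {T c γ : ℝ} (hT : 1 ≤ T)
    (hle : ∀ w ∈ Icc 1 T, h w ≤ c * w ^ γ) :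
    ∫ w, h w ∂pareto β ≤ c * β * (∫ w in (1)..T, w ^ (γ - β - 1)) + T ^ (-β) := by
  have hdh := integrableOn_pareto_density_mul hβ hm h0 h1
  rw [integral_pareto hβ, ← Icc_union_Ioi_eq_Ici hT,
    setIntegral_union ((Iic_disjoint_Ioi le_rfl).mono_left Icc_subset_Iic_self)
      measurableSet_Ioi (hdh.mono_set Icc_subset_Ici_self) (hdh.mono_set (Ioi_subset_Ici hT))]
  apply add_le_add
  · calc ∫ w in Icc 1 T, β * w ^ (-β - 1) * h w
        ≤ ∫ w in Icc 1 T, c * β * w ^ (γ - β - 1) := by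
          refine setIntegral_mono_on (hdh.mono_set Icc_subset_Ici_self) ?_ measurableSet_Icc ?_
          · refine ContinuousOn.integrableOn_Icc (continuousOn_const.mul ?_)
            exact continuousOn_id.rpow_const fun w hw => Or.inl (zero_lt_one.trans_le hw.1).ne'
          · intro w hw
            have : 0 < w := zero_lt_one.trans_le hw.1
            calc β * w ^ (-β - 1) * h w ≤ β * w ^ (-β - 1) * (c * w ^ γ) := by
                  gcongr; exact hle w hw
              _ = c * β * w ^ (γ - β - 1) := by
                  rw [show γ - β - 1 = (-β - 1) + γ by ring, rpow_add this]; ring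
      _ = c * β * ∫ w in (1)..T, w ^ (γ - β - 1) := by
          rw [integral_const_mul, integral_Icc_eq_integral_Ioc, intervalIntegral.integral_of_le hT]
  · calc ∫ w in Ioi T, β * w ^ (-β - 1) * h w ≤ ∫ w in Ioi T, β * w ^ (-β - 1) := by
          refine setIntegral_mono_on (hdh.mono_set (Ioi_subset_Ici hT))
            (integrableOn_pareto_density hβ (by linarith)) measurableSet_Ioi fun w hw => ?_
          have : 0 < w := by linarith [hw.out]
          exact mul_le_of_le_one_right (by positivity) (h1 w (hT.trans hw.out.le))
      _ = T ^ (-β) := integral_Ioi_pareto_density hβ (by linarith)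

lemma integral_id_pareto (hβ : 1 < β) : ∫ w, w ∂pareto β = β / (β - 1) := by
  rw [integral_pareto (by linarith), integral_Ici_eq_integral_Ioi,
    setIntegral_congr_fun measurableSet_Ioi (g := fun w => β * w ^ (-β)) fun w (hw : 1 < w) => by
      rw [sub_eq_add_neg, rpow_add (by linarith), rpow_neg_one]; field_simp,
    integral_const_mul, integral_Ioi_rpow_of_lt (by linarith) one_pos, one_rpow,
    show -β + 1 = -(β - 1) by ring, div_neg, neg_div, neg_neg, mul_one_div]

lemma integrable_id_pareto (hβ : 1 < β) : Integrable (fun w => w) (pareto β) := by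
  -- a function that is not integrable has Bochner integral `0`
  refine Integrable.of_integral_ne_zero ?_
  rw [integral_id_pareto hβ]
  exact (div_pos (by linarith) (by linarith)).ne'

lemma one_sub_exp_neg_mem_Icc {x : ℝ} (hx : 0 ≤ x) : 1 - exp (-x) ∈ Icc 0 1 :=
  ⟨sub_nonneg.2 (exp_le_one_iff.2 (neg_nonpos.2 hx)), sub_le_self _ (exp_pos _).le⟩

lemma integral_one_sub_exp_neg_mul_mem_Icc (hβ : 0 < β) {a : ℝ} (ha : 0 ≤ a) :
    ∫ w, 1 - exp (-(a * w)) ∂pareto β ∈ Icc 0 1 := by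
  have := isProbabilityMeasure_pareto hβ
  have hmem : ∀ᵐ w ∂pareto β, 1 - exp (-(a * w)) ∈ Icc 0 1 := by
    filter_upwards [ae_one_le_pareto β] with w hw
    exact one_sub_exp_neg_mem_Icc (by positivity)
  refine ⟨integral_nonneg_of_ae (hmem.mono fun _ h => h.1), ?_⟩
  calc ∫ w, 1 - exp (-(a * w)) ∂pareto β ≤ ∫ _, (1 : ℝ) ∂pareto β :=
        integral_mono_of_nonneg (hmem.mono fun _ h => h.1) (integrable_const 1)
          (hmem.mono fun _ h => h.2)
    _ = 1 := by simp

lemma integral_one_sub_exp_neg_mul_le_rpow (hβ : 0 < β) (hβ1 : β < 1) {a : ℝ} (ha : 0 < a) :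
    ∫ w, 1 - exp (-(a * w)) ∂pareto β ≤ a ^ β / (1 - β) := by
  have h1β : 0 < 1 - β := by linarith
  rcases le_or_gt 1 a with ha1 | ha1
  · calc ∫ w, 1 - exp (-(a * w)) ∂pareto β ≤ 1 :=
          (integral_one_sub_exp_neg_mul_mem_Icc hβ ha.le).2
      _ ≤ a ^ β := one_le_rpow ha1 hβ.le
      _ ≤ a ^ β / (1 - β) := le_div_self (by positivity) h1β (by linarith)
  refine (integral_pareto_le_of_le_rpow hβ (c := a) (γ := 1) (by fun_prop)
    (fun w hw => (one_sub_exp_neg_mem_Icc (by positivity)).1)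
    (fun w hw => (one_sub_exp_neg_mem_Icc (by positivity)).2) (one_le_inv_iff₀.2 ⟨ha, ha1.le⟩)
    fun w _ => by rw [rpow_one]; linarith [one_sub_le_exp_neg (a * w)]).trans ?_
  rw [integral_rpow (Or.inl (by linarith)), show 1 - β - 1 + 1 = 1 - β by ring, one_rpow,
    inv_rpow ha.le, inv_rpow ha.le, ← rpow_neg ha.le, neg_sub, rpow_sub_one ha.ne',
    rpow_neg ha.le, inv_inv]
  field_simp
  nlinarith [mul_pos hβ ha]

lemma integrable_one_sub_exp_neg_mul_prod (hβ : 0 < β) {c : ℝ} (hc : 0 ≤ c) :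
    Integrable (fun p : ℝ × ℝ => 1 - exp (-(c * p.1 * p.2))) ((pareto β).prod (pareto β)) := by
  have := isProbabilityMeasure_pareto hβ
  refine Integrable.of_bound (by fun_prop) 1 ?_
  filter_upwards [ae_one_le_pareto_prod hβ] with p ⟨h1, h2⟩
  have := one_sub_exp_neg_mem_Icc (x := c * p.1 * p.2) (by positivity)
  rw [norm_of_nonneg this.1]
  exact this.2

lemma integral_prod_one_sub_exp_neg_le_of_lt_one (hβ : 0 < β) (hβ1 : β < 1) {c T : ℝ}
    (hc : 0 < c) (hT : 1 ≤ T) :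
    ∫ p : ℝ × ℝ, 1 - exp (-(c * p.1 * p.2)) ∂(pareto β).prod (pareto β) ≤
      β / (1 - β) * c ^ β * log T + T ^ (-β) := by
  have := isProbabilityMeasure_pareto hβ
  have hm : Measurable fun x => ∫ y, 1 - exp (-(c * x * y)) ∂pareto β :=
    (Continuous.stronglyMeasurable (f := fun p : ℝ × ℝ => 1 - exp (-(c * p.1 * p.2)))
      (by fun_prop)).integral_prod_right'.measurable
  rw [integral_prod _ (integrable_one_sub_exp_neg_mul_prod hβ hc.le)]
  refine (integral_pareto_le_of_le_rpow hβ (c := c ^ β / (1 - β)) (γ := β) hm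
    (fun w hw => (integral_one_sub_exp_neg_mul_mem_Icc hβ (by positivity)).1)
    (fun w hw => (integral_one_sub_exp_neg_mul_mem_Icc hβ (by positivity)).2) hT
    fun w hw => ?_).trans_eq ?_
  · have hw0 : 0 < w := zero_lt_one.trans_le hw.1
    calc ∫ y, 1 - exp (-(c * w * y)) ∂pareto β ≤ (c * w) ^ β / (1 - β) :=
          integral_one_sub_exp_neg_mul_le_rpow hβ hβ1 (by positivity)
      _ = c ^ β / (1 - β) * w ^ β := by rw [mul_rpow hc.le hw0.le]; ring
  · have hlog : ∫ w in (1)..T, w ^ (β - β - 1) = log T := by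
      rw [sub_self, zero_sub, intervalIntegral.integral_congr (g := fun w => w⁻¹)
        fun w _ => rpow_neg_one w, integral_inv_of_pos one_pos (by linarith), div_one]
    rw [hlog]
    ring

lemma integral_prod_one_sub_exp_neg_le_of_one_lt (hβ : 1 < β) {c : ℝ} (hc : 0 ≤ c) :
    ∫ p : ℝ × ℝ, 1 - exp (-(c * p.1 * p.2)) ∂(pareto β).prod (pareto β) ≤
      c * (β / (β - 1)) ^ 2 := by
  have hβ0 : 0 < β := by linarith
  have := isProbabilityMeasure_pareto hβ0
  calc ∫ p : ℝ × ℝ, 1 - exp (-(c * p.1 * p.2)) ∂(pareto β).prod (pareto β)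
      ≤ ∫ p : ℝ × ℝ, c * (p.1 * p.2) ∂(pareto β).prod (pareto β) := by
        refine integral_mono_of_nonneg ?_ (((integrable_id_pareto hβ).mul_prod
          (integrable_id_pareto hβ)).const_mul c) (ae_of_all _ fun p => ?_)
        · filter_upwards [ae_one_le_pareto_prod hβ0] with p ⟨h1, h2⟩
          exact (one_sub_exp_neg_mem_Icc (by positivity)).1
        · show 1 - exp (-(c * p.1 * p.2)) ≤ c * (p.1 * p.2)
          rw [← mul_assoc]
          linarith [one_sub_le_exp_neg (c * p.1 * p.2)]
    _ = c * (β / (β - 1)) ^ 2 := by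
        rw [integral_const_mul, integral_prod_mul (fun w => w) (fun w => w),
          integral_id_pareto hβ, sq]

end Pareto

open Pareto in
/-- For `β > 0`, `β ≠ 1`, `α > 0`, `η > 0`, there are constants
`C₁, C₂, C₃ ≥ 0` such that for every `r > max(1, η^{1/α})`,
`E[1 − exp(−η W₁W₂ / r^α)] ≤ C₁ r^{−α} + C₂ r^{−αβ} log r + C₃ r^{−αβ}`,
where `W₁, W₂` are independent Pareto(β) random variables. -/
theorem stmt7 (β α η : ℝ) (hβ : 0 < β) (hβ1 : β ≠ 1) (hα : 0 < α) (hη : 0 < η) :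
    ∃ C₁ C₂ C₃ : ℝ, 0 ≤ C₁ ∧ 0 ≤ C₂ ∧ 0 ≤ C₃ ∧
      ∀ r : ℝ, max 1 (η ^ (1 / α)) < r →
        ∫ p : ℝ × ℝ, (1 - Real.exp (-(η * p.1 * p.2 / r ^ α)))
            ∂((pareto β).prod (pareto β)) ≤
          C₁ * r ^ (-α) + C₂ * r ^ (-(α * β)) * Real.log r + C₃ * r ^ (-(α * β)) := by
  have hscale : ∀ (r : ℝ) (p : ℝ × ℝ), η * p.1 * p.2 / r ^ α = η / r ^ α * p.1 * p.2 :=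
    fun _ _ => by ring
  simp only [hscale]
  rcases hβ1.lt_or_gt with hβ1 | hβ1
  · refine ⟨0, α * (β / (1 - β)) * η ^ β, 1, le_rfl, ?_, zero_le_one, fun r hr => ?_⟩
    · have : 0 < 1 - β := by linarith
      positivity
    have hr1 : 1 < r := (le_max_left _ _).trans_lt hr
    have hr0 : 0 < r := zero_lt_one.trans hr1
    refine (integral_prod_one_sub_exp_neg_le_of_lt_one hβ hβ1 (by positivity)
      (one_le_rpow hr1.le hα.le)).trans_eq ?_
    rw [div_rpow hη.le (by positivity), ← rpow_mul hr0.le, ← rpow_mul hr0.le, log_rpow hr0,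
      rpow_neg hr0.le, mul_neg, rpow_neg hr0.le]
    ring
  · refine ⟨η * (β / (β - 1)) ^ 2, 0, 0, by positivity, le_rfl, le_rfl, fun r hr => ?_⟩
    have hr0 : 0 < r := zero_lt_one.trans ((le_max_left _ _).trans_lt hr)
    refine (integral_prod_one_sub_exp_neg_le_of_one_lt hβ1 (by positivity)).trans_eq ?_
    rw [rpow_neg hr0.le]
    ring
end

section
/- Suppose β = 1, and let α > 0 and η > 0. Then there exist constants C₁, C₂, C₃ ≥ 0 (depending only on α, η) such that for every real r > max(1, η^{1/α}), E[ 1 − exp( − η W₁ W₂ / r^α ) ] ≤ C₁ r^{−α} (log r)² + C₂ r^{−α} log r + C₃ r^{−α}. -/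
open MeasureTheory Set Real
open scoped ENNReal NNReal

namespace Stmt8Aux

/-- The density of `pareto 1` as an `ℝ≥0`-valued function. -/
noncomputable def pd (w : ℝ) : ℝ≥0 :=
  Set.indicator (Set.Ici 1) (fun w => (w ^ (-2 : ℝ)).toNNReal) w

lemma pd_fun : pd = Set.indicator (Set.Ici 1) fun w => (w ^ (-2 : ℝ)).toNNReal := rfl

instance : SFinite (pareto 1) := by unfold pareto; infer_instance

lemma pd_meas : Measurable pd :=
  pd_fun ▸ Measurable.indicator ((measurable_id.pow_const _).real_toNNReal) measurableSet_Ici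

lemma pareto_one : pareto 1 = volume.withDensity fun w => ((pd w : ℝ≥0) : ℝ≥0∞) := by
  unfold pareto pd
  congr 1
  funext w
  by_cases h : w ∈ Set.Ici (1 : ℝ)
  · rw [Set.indicator_of_mem h, Set.indicator_of_mem h]
    norm_num [ENNReal.ofReal]
  · rw [Set.indicator_of_notMem h, Set.indicator_of_notMem h]
    simp

lemma pd_smul (g : ℝ → ℝ) :
    (fun w => pd w • g w) = Set.indicator (Set.Ici 1) (fun w => w ^ (-2 : ℝ) * g w) := by
  funext w
  by_cases h : w ∈ Set.Ici (1 : ℝ)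
  · have hw0 : (0 : ℝ) ≤ w := le_trans zero_le_one h
    rw [Set.indicator_of_mem h, pd, Set.indicator_of_mem h, NNReal.smul_def,
      Real.coe_toNNReal _ (Real.rpow_nonneg hw0 _), smul_eq_mul]
  · rw [Set.indicator_of_notMem h, pd, Set.indicator_of_notMem h]
    simp

lemma integral_pareto (g : ℝ → ℝ) :
    ∫ w, g w ∂(pareto 1) = ∫ w in Set.Ici (1 : ℝ), w ^ (-2 : ℝ) * g w := by
  rw [pareto_one, integral_withDensity_eq_integral_smul pd_meas,
    ← integral_indicator measurableSet_Ici]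
  exact congrArg _ (pd_smul g)

lemma integrable_pareto {g : ℝ → ℝ}
    (h : IntegrableOn (fun w => w ^ (-2 : ℝ) * g w) (Set.Ici 1)) :
    Integrable g (pareto 1) := by
  rw [pareto_one, integrable_withDensity_iff_integrable_smul pd_meas]
  rw [← integrable_indicator_iff measurableSet_Ici] at h
  simpa [pd_smul g] using h

lemma moment (s : ℝ) (hs : s < 1) :
    Integrable (fun w : ℝ => w ^ s) (pareto 1) ∧
      ∫ w, w ^ s ∂(pareto 1) = 1 / (1 - s) := by
  have h2 : s - 2 < -1 := by linarith
  have key : ∀ w ∈ Set.Ici (1 : ℝ), w ^ (-2 : ℝ) * w ^ s = w ^ (s - 2) := by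
    intro w hw
    have hw0 : (0 : ℝ) < w := lt_of_lt_of_le one_pos hw
    rw [← Real.rpow_add hw0]
    ring_nf
  have hint : IntegrableOn (fun w : ℝ => w ^ (s - 2)) (Set.Ici 1) := by
    rw [integrableOn_Ici_iff_integrableOn_Ioi]
    exact integrableOn_Ioi_rpow_of_lt h2 one_pos
  constructor
  · exact integrable_pareto (hint.congr_fun (fun w hw => (key w hw).symm) measurableSet_Ici)
  · rw [integral_pareto, setIntegral_congr_fun measurableSet_Ici key,
      integral_Ici_eq_integral_Ioi, integral_Ioi_rpow_of_lt h2 one_pos, Real.one_rpow]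
    rw [div_eq_div_iff (by linarith : s - 2 + 1 < 0).ne (by linarith : (0:ℝ) < 1 - s).ne']
    ring

lemma pareto_ae : ∀ᵐ w ∂(pareto 1), w ∈ Set.Ici (1 : ℝ) := by
  rw [pareto_one]
  refine mem_ae_iff.mpr ?_
  rw [show {x : ℝ | x ∈ Set.Ici (1 : ℝ)}ᶜ = Set.Iio 1 by ext x; simp,
    withDensity_apply _ measurableSet_Iio]
  have hz : ∀ᵐ w ∂(volume.restrict (Set.Iio (1 : ℝ))), ((pd w : ℝ≥0) : ℝ≥0∞) = 0 := by
    rw [ae_restrict_iff' measurableSet_Iio]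
    refine ae_of_all _ fun w hw => ?_
    have hnot : w ∉ Set.Ici (1 : ℝ) := by simpa using not_le.mpr hw
    rw [pd, Set.indicator_of_notMem hnot]
    simp
  rw [lintegral_congr_ae hz, lintegral_zero]

lemma pointwise (s x : ℝ) (hs0 : 0 < s) (hs1 : s ≤ 1) (hx : 0 ≤ x) :
    1 - Real.exp (-x) ≤ x ^ s := by
  rcases le_or_gt x 1 with h | h
  · have h1 : 1 - Real.exp (-x) ≤ x := by
      have := Real.add_one_le_exp (-x); linarith
    calc 1 - Real.exp (-x) ≤ x := h1
      _ = x ^ (1 : ℝ) := (Real.rpow_one x).symm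
      _ ≤ x ^ s := by
        rcases eq_or_lt_of_le hx with h0 | h0
        · rw [← h0]; simp [Real.zero_rpow hs0.ne']
        · exact Real.rpow_le_rpow_of_exponent_ge h0 h hs1
  · have := Real.exp_pos (-x)
    calc 1 - Real.exp (-x) ≤ 1 := by linarith
      _ ≤ x ^ s := Real.one_le_rpow h.le hs0.le

lemma main_bound (s T : ℝ) (hs0 : 0 < s) (hs1 : s < 1) (hT : 0 < T) :
    ∫ p : ℝ × ℝ, (1 - Real.exp (-(T * p.1 * p.2))) ∂((pareto 1).prod (pareto 1)) ≤
      T ^ s * ((1 / (1 - s)) * (1 / (1 - s))) := by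
  obtain ⟨hint, hval⟩ := moment s hs1
  have hprod_ae : ∀ᵐ p ∂((pareto 1).prod (pareto 1)),
      p.1 ∈ Set.Ici (1 : ℝ) ∧ p.2 ∈ Set.Ici (1 : ℝ) := by
    rw [Measure.ae_prod_iff_ae_ae]
    · filter_upwards [pareto_ae] with x hx
      filter_upwards [pareto_ae] with y hy
      exact ⟨hx, hy⟩
    · exact (measurableSet_Ici.preimage measurable_fst).inter
        (measurableSet_Ici.preimage measurable_snd)
  have hg : Integrable (fun p : ℝ × ℝ => (T ^ s * p.1 ^ s) * p.2 ^ s)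
      ((pareto 1).prod (pareto 1)) := Integrable.mul_prod (hint.const_mul _) hint
  have hle : ∫ p : ℝ × ℝ, (1 - Real.exp (-(T * p.1 * p.2))) ∂((pareto 1).prod (pareto 1)) ≤
      ∫ p : ℝ × ℝ, (T ^ s * p.1 ^ s) * p.2 ^ s ∂((pareto 1).prod (pareto 1)) := by
    refine integral_mono_of_nonneg ?_ hg ?_
    · filter_upwards [hprod_ae] with p hp
      have hx : 0 ≤ T * p.1 * p.2 :=
        mul_nonneg (mul_nonneg hT.le (le_trans zero_le_one hp.1)) (le_trans zero_le_one hp.2)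
      have : Real.exp (-(T * p.1 * p.2)) ≤ 1 := Real.exp_le_one_iff.mpr (by linarith)
      simp only [Pi.zero_apply]
      linarith
    · filter_upwards [hprod_ae] with p hp
      have h1 : (0 : ℝ) ≤ p.1 := le_trans zero_le_one hp.1
      have h2 : (0 : ℝ) ≤ p.2 := le_trans zero_le_one hp.2
      have hx : 0 ≤ T * p.1 * p.2 := mul_nonneg (mul_nonneg hT.le h1) h2
      calc 1 - Real.exp (-(T * p.1 * p.2)) ≤ (T * p.1 * p.2) ^ s :=
            pointwise s _ hs0 hs1.le hx
        _ = (T ^ s * p.1 ^ s) * p.2 ^ s := by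
            rw [Real.mul_rpow (mul_nonneg hT.le h1) h2, Real.mul_rpow hT.le h1]
  calc ∫ p : ℝ × ℝ, (1 - Real.exp (-(T * p.1 * p.2))) ∂((pareto 1).prod (pareto 1)) ≤
      ∫ p : ℝ × ℝ, (T ^ s * p.1 ^ s) * p.2 ^ s ∂((pareto 1).prod (pareto 1)) := hle
    _ = (∫ w, T ^ s * w ^ s ∂(pareto 1)) * (∫ v, v ^ s ∂(pareto 1)) :=
        integral_prod_mul (fun w => T ^ s * w ^ s) (fun v => v ^ s)
    _ = T ^ s * ((1 / (1 - s)) * (1 / (1 - s))) := by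
        rw [integral_const_mul, hval]; ring

end Stmt8Aux

/-- For `β = 1`, `α > 0`, `η > 0`, there are constants `C₁, C₂, C₃ ≥ 0`
such that for every `r > max(1, η^{1/α})`,
`E[1 − exp(−η W₁W₂ / r^α)] ≤ C₁ r^{−α} (log r)² + C₂ r^{−α} log r + C₃ r^{−α}`,
where `W₁, W₂` are independent Pareto(1) random variables. -/
theorem stmt8 (α η : ℝ) (hα : 0 < α) (hη : 0 < η) :
    ∃ C₁ C₂ C₃ : ℝ, 0 ≤ C₁ ∧ 0 ≤ C₂ ∧ 0 ≤ C₃ ∧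
      ∀ r : ℝ, max 1 (η ^ (1 / α)) < r →
        ∫ p : ℝ × ℝ, (1 - Real.exp (-(η * p.1 * p.2 / r ^ α)))
            ∂((pareto 1).prod (pareto 1)) ≤
          C₁ * r ^ (-α) * (Real.log r) ^ 2 + C₂ * r ^ (-α) * Real.log r + C₃ * r ^ (-α) := by
  refine ⟨max 1 η * Real.exp α, 0, 4 * η ^ (1/2 : ℝ) * Real.exp α, ?_, le_refl 0, ?_, ?_⟩
  · positivity
  · positivity
  intro r hr
  have hr1 : (1 : ℝ) < r := lt_of_le_of_lt (le_max_left _ _) hr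
  have hr0 : (0 : ℝ) < r := lt_trans one_pos hr1
  have hrα : (0 : ℝ) < r ^ α := Real.rpow_pos_of_pos hr0 α
  have hT : (0 : ℝ) < η / r ^ α := div_pos hη hrα
  have hrw : (fun p : ℝ × ℝ => 1 - Real.exp (-(η * p.1 * p.2 / r ^ α))) =
      fun p : ℝ × ℝ => 1 - Real.exp (-((η / r ^ α) * p.1 * p.2)) := by
    funext p
    congr 2
    ring
  rw [hrw]
  have hlog : 0 ≤ Real.log r := Real.log_nonneg hr1.le
  have hdiv : η / r ^ α = η * r ^ (-α) := by
    rw [Real.rpow_neg hr0.le, div_eq_mul_inv]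
  have hrna : (0 : ℝ) < r ^ (-α) := Real.rpow_pos_of_pos hr0 _
  rcases le_or_gt r (Real.exp 2) with hcase | hcase
  · -- small r : use s = 1/2
    have hmain := Stmt8Aux.main_bound (1/2) (η / r ^ α) (by norm_num) (by norm_num) hT
    have hexp : r ^ (α / 2) ≤ Real.exp α := by
      calc r ^ (α / 2) ≤ (Real.exp 2) ^ (α / 2) :=
            Real.rpow_le_rpow hr0.le hcase (by positivity)
        _ = Real.exp α := by
            rw [Real.rpow_def_of_pos (Real.exp_pos 2), Real.log_exp]
            congr 1
            ring
    have hTs : (η / r ^ α) ^ (1/2 : ℝ) ≤ η ^ (1/2 : ℝ) * (Real.exp α * r ^ (-α)) := by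
      rw [hdiv, Real.mul_rpow hη.le hrna.le, ← Real.rpow_mul hr0.le]
      have h1 : -α * (1/2) = α / 2 + (-α) := by ring
      rw [h1, Real.rpow_add hr0]
      exact mul_le_mul_of_nonneg_left
        (mul_le_mul_of_nonneg_right hexp hrna.le) (by positivity)
    have hfin : (η / r ^ α) ^ (1/2 : ℝ) * ((1 / (1 - 1/2)) * (1 / (1 - 1/2 : ℝ))) ≤
        4 * η ^ (1/2 : ℝ) * Real.exp α * r ^ (-α) := by
      have : ((1 : ℝ) / (1 - 1/2)) * (1 / (1 - 1/2 : ℝ)) = 4 := by norm_num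
      rw [this]
      nlinarith [hTs, Real.rpow_nonneg hη.le (1/2 : ℝ), Real.exp_pos α]
    have hC1 : 0 ≤ max 1 η * Real.exp α * r ^ (-α) * (Real.log r) ^ 2 := by positivity
    calc ∫ p : ℝ × ℝ, (1 - Real.exp (-((η / r ^ α) * p.1 * p.2)))
          ∂((pareto 1).prod (pareto 1)) ≤
        (η / r ^ α) ^ (1/2 : ℝ) * ((1 / (1 - 1/2)) * (1 / (1 - 1/2 : ℝ))) := hmain
      _ ≤ 4 * η ^ (1/2 : ℝ) * Real.exp α * r ^ (-α) := hfin
      _ ≤ _ := by nlinarith [hC1]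
  · -- large r : use s = 1 - 1/log r
    set L : ℝ := Real.log r with hL
    have hL2 : (2 : ℝ) ≤ L := (Real.le_log_iff_exp_le hr0).mpr hcase.le
    have hL0 : (0 : ℝ) < L := by linarith
    set s : ℝ := 1 - 1 / L with hs
    have hinv0 : 0 < 1 / L := by positivity
    have hinv : 1 / L ≤ 1 / 2 := by
      rw [div_le_div_iff₀ hL0 two_pos]; linarith
    have hs0 : 0 < s := by rw [hs]; linarith
    have hs1 : s < 1 := by rw [hs]; linarith
    have hmain := Stmt8Aux.main_bound s (η / r ^ α) hs0 hs1 hT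
    have hLs : 1 / (1 - s) = L := by
      rw [hs]; rw [show (1 : ℝ) - (1 - 1 / L) = 1 / L by ring, one_div_one_div]
    have hrp : r ^ (α / L) = Real.exp α := by
      rw [Real.rpow_def_of_pos hr0, ← hL]
      congr 1
      field_simp
    have hηs : η ^ s ≤ max 1 η := by
      rcases le_total η 1 with h | h
      · exact le_trans (Real.rpow_le_one hη.le h hs0.le) (le_max_left _ _)
      · calc η ^ s ≤ η ^ (1 : ℝ) := Real.rpow_le_rpow_of_exponent_le h hs1.le
          _ = η := Real.rpow_one η
          _ ≤ max 1 η := le_max_right _ _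
    have hTs : (η / r ^ α) ^ s ≤ max 1 η * Real.exp α * r ^ (-α) := by
      rw [hdiv, Real.mul_rpow hη.le hrna.le, ← Real.rpow_mul hr0.le]
      have he : -α * s = α / L + (-α) := by rw [hs]; field_simp; ring
      rw [he, Real.rpow_add hr0, hrp]
      calc η ^ s * (Real.exp α * r ^ (-α)) ≤ max 1 η * (Real.exp α * r ^ (-α)) :=
            mul_le_mul_of_nonneg_right hηs (by positivity)
        _ = max 1 η * Real.exp α * r ^ (-α) := by ring
    have hC3 : 0 ≤ 4 * η ^ (1/2 : ℝ) * Real.exp α * r ^ (-α) := by positivity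
    calc ∫ p : ℝ × ℝ, (1 - Real.exp (-((η / r ^ α) * p.1 * p.2)))
          ∂((pareto 1).prod (pareto 1)) ≤
        (η / r ^ α) ^ s * ((1 / (1 - s)) * (1 / (1 - s))) := hmain
      _ = (η / r ^ α) ^ s * L ^ 2 := by rw [hLs]; ring
      _ ≤ max 1 η * Real.exp α * r ^ (-α) * L ^ 2 :=
          mul_le_mul_of_nonneg_right hTs (sq_nonneg L)
      _ ≤ _ := by linarith
end

section
/- Suppose β > 0 with β ≠ 1, and let α > 0 and η > 0. Then there exist constants c₁, c₂, c₃ ≥ 0 (depending only on α, β, η) such that for every real r > max(1, η^{1/α}), the truncated expectation satisfies E[ (η W₁ W₂ / r^α) · 1{ W₁ W₂ < r^α / η } ] ≤ c₁ r^{−α} + c₂ r^{−αβ} log r + c₃ r^{−αβ}. -/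
open MeasureTheory Set Real
open scoped ENNReal

/-!
Put `R = r ^ α / η`, so that the integrand is `(W₁W₂ / R) · 1{W₁W₂ < R}`.

For `β > 1` drop the indicator: the expectation is at most `E[W₁] E[W₂] / R = (β / (β - 1))² / R`.

For `β < 1` integrate `W₂` first. For `1 ≤ w < R`,
`E[w W₂ 1{W₂ < R / w}] ≤ w · β / (1 - β) · (R / w) ^ (1 - β) = β / (1 - β) · R ^ (1 - β) · w ^ β`,
while for `w ≥ R` the inner integral vanishes because `W₂ ≥ 1`. Against the density
`β w ^ (-β - 1)` on `[1, R)` the factor `w ^ β` leaves `β ∫₁^R dw / w = β log R`, so the expectation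
is at most `β² / (1 - β) · R ^ (-β) · log R`, and
`R ^ (-β) log R = η ^ β r ^ (-αβ) (α log r - log η)`.
-/

lemma setLIntegral_Ico_ofReal_eq_intervalIntegral {f : ℝ → ℝ} {a b : ℝ} (hab : a ≤ b)
    (hf : IntegrableOn f (Ioc a b)) (hnn : ∀ x ∈ Ioc a b, 0 ≤ f x) :
    ∫⁻ x in Ico a b, ENNReal.ofReal (f x) = ENNReal.ofReal (∫ x in a..b, f x) := by
  rw [intervalIntegral.integral_of_le hab, ofReal_integral_eq_lintegral_ofReal hf
    ((ae_restrict_iff' measurableSet_Ioc).2 (ae_of_all _ hnn)),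
    Measure.restrict_congr_set Ico_ae_eq_Ioc]

lemma integral_indicator_mul_div_le_of_lintegral_le {μ : Measure (ℝ × ℝ)}
    (hμ : ∀ᵐ q ∂μ, 0 ≤ q.1 * q.2) {R M : ℝ} (hR : 0 < R) (hM : 0 ≤ M)
    (h : ∫⁻ q, {q : ℝ × ℝ | q.1 * q.2 < R}.indicator (fun q => ENNReal.ofReal (q.1 * q.2)) q ∂μ ≤
      ENNReal.ofReal M) :
    ∫ q, {q : ℝ × ℝ | q.1 * q.2 < R}.indicator (fun q => q.1 * q.2 / R) q ∂μ ≤ M / R := by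
  have hmeas : Measurable ({q : ℝ × ℝ | q.1 * q.2 < R}.indicator fun q => q.1 * q.2 / R) :=
    Measurable.indicator (by fun_prop) (measurableSet_lt (by fun_prop) (by fun_prop))
  rw [integral_eq_lintegral_of_nonneg_ae (f := {q : ℝ × ℝ | q.1 * q.2 < R}.indicator _)
    (hμ.mono fun q hq => indicator_apply_nonneg fun _ => div_nonneg hq hR.le)
    hmeas.aestronglyMeasurable]
  refine ENNReal.toReal_le_of_le_ofReal (div_nonneg hM hR.le) ?_
  calc _ = ∫⁻ q, {q : ℝ × ℝ | q.1 * q.2 < R}.indicator (fun q => ENNReal.ofReal (q.1 * q.2)) q *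
          ENNReal.ofReal R⁻¹ ∂μ := by
        refine lintegral_congr fun q => ?_
        simp only [Set.indicator]
        split_ifs
        · rw [div_eq_mul_inv, ENNReal.ofReal_mul' (inv_nonneg.2 hR.le)]
        · simp
    _ = (∫⁻ q, {q : ℝ × ℝ | q.1 * q.2 < R}.indicator (fun q => ENNReal.ofReal (q.1 * q.2)) q
          ∂μ) * ENNReal.ofReal R⁻¹ := lintegral_mul_const' _ _ ENNReal.ofReal_ne_top
    _ ≤ ENNReal.ofReal M * ENNReal.ofReal R⁻¹ := by gcongr
    _ = ENNReal.ofReal (M / R) := by rw [← ENNReal.ofReal_mul hM, div_eq_mul_inv]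

instance (β : ℝ) : SFinite (pareto β) := Measure.withDensity.instSFinite

section

variable {β : ℝ}

lemma pareto_eq_withDensity_restrict :
    pareto β = (volume.restrict (Ici 1)).withDensity fun w => ENNReal.ofReal (β * w ^ (-β - 1)) :=
  withDensity_indicator measurableSet_Ici _

lemma pareto_ae_one_le : ∀ᵐ w ∂pareto β, 1 ≤ w := by
  rw [pareto_eq_withDensity_restrict]
  exact (withDensity_absolutelyContinuous _ _).ae_le (ae_restrict_mem measurableSet_Ici)

lemma pareto_prod_ae_one_le : ∀ᵐ q ∂(pareto β).prod (pareto β), 1 ≤ q.1 ∧ 1 ≤ q.2 :=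
  (Measure.quasiMeasurePreserving_fst.ae pareto_ae_one_le).and
    (Measure.quasiMeasurePreserving_snd.ae pareto_ae_one_le)

lemma setLIntegral_pareto_ofReal_rpow (p : ℝ) {s : Set ℝ} (hs : MeasurableSet s) :
    ∫⁻ w in s, ENNReal.ofReal (w ^ p) ∂pareto β =
      ∫⁻ w in s ∩ Ici 1, ENNReal.ofReal (β * w ^ (p - β - 1)) := by
  rw [pareto_eq_withDensity_restrict, setLIntegral_withDensity_eq_setLIntegral_mul _
    (by fun_prop) (by fun_prop) hs, Measure.restrict_restrict hs]
  refine setLIntegral_congr_fun (hs.inter measurableSet_Ici) fun w hw => ?_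
  have hw0 : 0 < w := zero_lt_one.trans_le hw.2
  simp only [Pi.mul_apply]
  rw [← ENNReal.ofReal_mul' (rpow_nonneg hw0.le p), mul_assoc, ← rpow_add hw0]
  ring_nf

lemma setLIntegral_pareto_of_le_one {T : ℝ} (hT : T ≤ 1) (f : ℝ → ℝ≥0∞) :
    ∫⁻ w in Iio T, f w ∂pareto β = 0 := by
  have : pareto β (Iio T) = 0 :=
    measure_mono_null (fun w hw => not_le.2 (lt_of_lt_of_le hw hT)) (ae_iff.1 pareto_ae_one_le)
  rw [Measure.restrict_eq_zero.2 this, lintegral_zero_measure]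

lemma lintegral_pareto_ofReal_rpow (hβ : 0 ≤ β) {p : ℝ} (hp : p < β) :
    ∫⁻ w, ENNReal.ofReal (w ^ p) ∂pareto β = ENNReal.ofReal (β / (β - p)) := by
  have hexp : p - β - 1 < -1 := by linarith
  rw [← setLIntegral_univ, setLIntegral_pareto_ofReal_rpow p MeasurableSet.univ, univ_inter,
    Measure.restrict_congr_set Ioi_ae_eq_Ici.symm, ← ofReal_integral_eq_lintegral_ofReal
      ((integrableOn_Ioi_rpow_of_lt hexp zero_lt_one).const_mul β)
      ((ae_restrict_iff' measurableSet_Ioi).2 (ae_of_all _ fun w hw =>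
        mul_nonneg hβ (rpow_nonneg (zero_lt_one.trans hw).le _))),
    integral_const_mul, integral_Ioi_rpow_of_lt hexp zero_lt_one, one_rpow, sub_add_cancel,
    neg_div, ← div_neg, neg_sub, mul_one_div]

lemma setLIntegral_pareto_Iio_eq_intervalIntegral (hβ : 0 ≤ β) (p : ℝ) {T : ℝ} (hT : 1 ≤ T) :
    ∫⁻ w in Iio T, ENNReal.ofReal (w ^ p) ∂pareto β =
      ENNReal.ofReal (β * ∫ w in 1..T, w ^ (p - β - 1)) := by
  rw [setLIntegral_pareto_ofReal_rpow p measurableSet_Iio, Iio_inter_Ici,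
    setLIntegral_Ico_ofReal_eq_intervalIntegral hT, intervalIntegral.integral_const_mul]
  · refine (ContinuousOn.integrableOn_Icc ?_).mono_set Ioc_subset_Icc_self
    exact (continuousOn_id.rpow_const fun w hw =>
      Or.inl (zero_lt_one.trans_le hw.1).ne').const_smul β
  · exact fun w hw => mul_nonneg hβ (rpow_nonneg (zero_lt_one.trans hw.1).le _)

lemma setLIntegral_pareto_Iio_ofReal_rpow (hβ : 0 ≤ β) {p T : ℝ} (hp : p ≠ β) (hT : 1 ≤ T) :
    ∫⁻ w in Iio T, ENNReal.ofReal (w ^ p) ∂pareto β =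
      ENNReal.ofReal (β * ((T ^ (p - β) - 1) / (p - β))) := by
  have hexp : p - β - 1 ≠ -1 := by intro h; apply hp; linarith
  rw [setLIntegral_pareto_Iio_eq_intervalIntegral hβ p hT,
    integral_rpow (Or.inr ⟨hexp, notMem_uIcc_of_lt zero_lt_one (zero_lt_one.trans_le hT)⟩),
    one_rpow, sub_add_cancel]

lemma setLIntegral_pareto_Iio_ofReal_rpow_self (hβ : 0 ≤ β) {T : ℝ} (hT : 1 ≤ T) :
    ∫⁻ w in Iio T, ENNReal.ofReal (w ^ β) ∂pareto β = ENNReal.ofReal (β * Real.log T) := by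
  rw [setLIntegral_pareto_Iio_eq_intervalIntegral hβ β hT, sub_self, zero_sub,
    intervalIntegral.integral_congr fun w _ => rpow_neg_one w,
    integral_inv_of_pos zero_lt_one (zero_lt_one.trans_le hT), div_one]

lemma lintegral_pareto_prod_ofReal_mul (hβ : 1 < β) :
    ∫⁻ q, ENNReal.ofReal (q.1 * q.2) ∂(pareto β).prod (pareto β) =
      ENNReal.ofReal ((β / (β - 1)) ^ 2) := by
  have hmean : ∫⁻ w, ENNReal.ofReal w ∂pareto β = ENNReal.ofReal (β / (β - 1)) := by
    simpa only [rpow_one] using lintegral_pareto_ofReal_rpow (zero_le_one.trans hβ.le) hβ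
  rw [lintegral_congr_ae (pareto_prod_ae_one_le.mono fun q hq =>
      ENNReal.ofReal_mul (zero_le_one.trans hq.1)),
    lintegral_prod_mul (by fun_prop) (by fun_prop), hmean,
    ← ENNReal.ofReal_mul (div_nonneg (by linarith) (by linarith)), sq]

lemma lintegral_pareto_indicator_mul_le (hβ : 0 ≤ β) (hβ1 : β < 1) {R x : ℝ} (hR : 0 < R)
    (hx : 1 ≤ x) :
    ∫⁻ y, {q : ℝ × ℝ | q.1 * q.2 < R}.indicator (fun q => ENNReal.ofReal (q.1 * q.2)) (x, y)
        ∂pareto β ≤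
      ENNReal.ofReal (β / (1 - β) * R ^ (1 - β)) *
        (Iio R).indicator (fun x => ENNReal.ofReal (x ^ β)) x := by
  have hx0 : 0 < x := zero_lt_one.trans_le hx
  have hslice : ∀ y, {q : ℝ × ℝ | q.1 * q.2 < R}.indicator
      (fun q => ENNReal.ofReal (q.1 * q.2)) (x, y) =
        (Iio (R / x)).indicator (fun y => ENNReal.ofReal x * ENNReal.ofReal y) y := by
    intro y
    simp only [Set.indicator, mem_ofPred_eq, mem_Iio, lt_div_iff₀' hx0,
      ENNReal.ofReal_mul hx0.le]
  rw [lintegral_congr hslice, lintegral_indicator measurableSet_Iio,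
    lintegral_const_mul' _ _ ENNReal.ofReal_ne_top]
  rcases lt_or_ge x R with hxR | hxR
  · have hT : 1 ≤ R / x := (one_le_div hx0).2 hxR.le
    have htrunc := setLIntegral_pareto_Iio_ofReal_rpow hβ (p := 1) hβ1.ne' hT
    simp only [rpow_one] at htrunc
    rw [htrunc, indicator_of_mem (mem_Iio.2 hxR), ← ENNReal.ofReal_mul hx0.le,
      ← ENNReal.ofReal_mul (by have := rpow_nonneg hR.le (1 - β); positivity)]
    apply ENNReal.ofReal_le_ofReal
    have h1β : 0 < 1 - β := by linarith
    calc x * (β * (((R / x) ^ (1 - β) - 1) / (1 - β)))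
        ≤ x * (β * ((R / x) ^ (1 - β) / (1 - β))) := by gcongr; linarith
      _ = β / (1 - β) * R ^ (1 - β) * x ^ β := by
        rw [div_rpow hR.le hx0.le, rpow_sub hx0, rpow_one]
        field_simp
  · rw [setLIntegral_pareto_of_le_one ((div_le_one hx0).2 hxR), mul_zero]
    exact zero_le

lemma lintegral_pareto_prod_indicator_mul_le (hβ : 0 ≤ β) (hβ1 : β < 1) {R : ℝ} (hR : 1 ≤ R) :
    ∫⁻ q, {q : ℝ × ℝ | q.1 * q.2 < R}.indicator (fun q => ENNReal.ofReal (q.1 * q.2)) q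
        ∂(pareto β).prod (pareto β) ≤
      ENNReal.ofReal (β ^ 2 / (1 - β) * R ^ (1 - β) * Real.log R) := by
  have hR0 : 0 < R := zero_lt_one.trans_le hR
  rw [lintegral_prod _ (Measurable.indicator (by fun_prop)
    (measurableSet_lt (by fun_prop) (by fun_prop))).aemeasurable]
  calc _ ≤ ∫⁻ x, ENNReal.ofReal (β / (1 - β) * R ^ (1 - β)) *
          (Iio R).indicator (fun x => ENNReal.ofReal (x ^ β)) x ∂pareto β :=
        lintegral_mono_ae (pareto_ae_one_le.mono fun x hx =>
          lintegral_pareto_indicator_mul_le hβ hβ1 hR0 hx)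
    _ = ENNReal.ofReal (β / (1 - β) * R ^ (1 - β)) * ENNReal.ofReal (β * Real.log R) := by
        rw [lintegral_const_mul' _ _ ENNReal.ofReal_ne_top, lintegral_indicator measurableSet_Iio,
          setLIntegral_pareto_Iio_ofReal_rpow_self hβ hR]
    _ = ENNReal.ofReal (β ^ 2 / (1 - β) * R ^ (1 - β) * Real.log R) := by
        have h1β : 0 < 1 - β := by linarith
        rw [← ENNReal.ofReal_mul (by have := rpow_nonneg hR0.le (1 - β); positivity)]
        ring_nf

lemma pareto_prod_ae_mul_nonneg : ∀ᵐ q ∂(pareto β).prod (pareto β), 0 ≤ q.1 * q.2 :=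
  pareto_prod_ae_one_le.mono fun _ hq =>
    mul_nonneg (zero_le_one.trans hq.1) (zero_le_one.trans hq.2)

lemma integral_pareto_prod_truncated_le_of_one_lt (hβ : 1 < β) {R : ℝ} (hR : 0 < R) :
    ∫ q, {q : ℝ × ℝ | q.1 * q.2 < R}.indicator (fun q => q.1 * q.2 / R) q
        ∂(pareto β).prod (pareto β) ≤ (β / (β - 1)) ^ 2 / R :=
  integral_indicator_mul_div_le_of_lintegral_le pareto_prod_ae_mul_nonneg hR (sq_nonneg _)
    ((lintegral_mono fun q => indicator_le_self _ _ q).trans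
      (lintegral_pareto_prod_ofReal_mul hβ).le)

lemma integral_pareto_prod_truncated_le_of_lt_one (hβ : 0 ≤ β) (hβ1 : β < 1) {R : ℝ}
    (hR : 1 ≤ R) :
    ∫ q, {q : ℝ × ℝ | q.1 * q.2 < R}.indicator (fun q => q.1 * q.2 / R) q
        ∂(pareto β).prod (pareto β) ≤ β ^ 2 / (1 - β) * R ^ (-β) * Real.log R := by
  have hR0 : 0 < R := zero_lt_one.trans_le hR
  have h1β : 0 < 1 - β := by linarith
  have hbound := integral_indicator_mul_div_le_of_lintegral_le pareto_prod_ae_mul_nonneg hR0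
    (by have := rpow_nonneg hR0.le (1 - β); have := log_nonneg hR; positivity)
    (lintegral_pareto_prod_indicator_mul_le hβ hβ1 hR)
  have hpow : R ^ (1 - β) / R = R ^ (-β) := by rw [← rpow_sub_one hR0.ne', sub_sub_cancel_left]
  refine hbound.trans_eq ?_
  rw [← hpow]
  ring

end

/-- For `β > 0`, `β ≠ 1`, `α > 0`, `η > 0`, there are constants
`c₁, c₂, c₃ ≥ 0` such that for every `r > max(1, η^{1/α})`,
`E[(η W₁W₂ / r^α) · 1{W₁W₂ < r^α/η}] ≤ c₁ r^{−α} + c₂ r^{−αβ} log r + c₃ r^{−αβ}`,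
where `W₁, W₂` are independent Pareto(β) random variables. -/
theorem stmt9 (β α η : ℝ) (hβ : 0 < β) (hβ1 : β ≠ 1) (hα : 0 < α) (hη : 0 < η) :
    ∃ c₁ c₂ c₃ : ℝ, 0 ≤ c₁ ∧ 0 ≤ c₂ ∧ 0 ≤ c₃ ∧
      ∀ r : ℝ, max 1 (η ^ (1 / α)) < r →
        ∫ p : ℝ × ℝ,
            Set.indicator {q : ℝ × ℝ | q.1 * q.2 < r ^ α / η}
              (fun q : ℝ × ℝ => η * q.1 * q.2 / r ^ α) p
            ∂((pareto β).prod (pareto β)) ≤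
          c₁ * r ^ (-α) + c₂ * r ^ (-(α * β)) * Real.log r + c₃ * r ^ (-(α * β)) := by
  have hscale : ∀ r : ℝ, 0 < r → (fun q : ℝ × ℝ => η * q.1 * q.2 / r ^ α) =
      fun q => q.1 * q.2 / (r ^ α / η) := fun r hr => funext fun q => by
    have := (rpow_pos_of_pos hr α).ne'
    field_simp
  have hthreshold : ∀ r : ℝ, max 1 (η ^ (1 / α)) < r → 1 < r ∧ 1 < r ^ α / η := fun r hr =>
    ⟨(le_max_left _ _).trans_lt hr, (one_lt_div hη).2 <| calc
      η = (η ^ (1 / α)) ^ α := by rw [← rpow_mul hη.le, one_div_mul_cancel hα.ne', rpow_one]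
      _ < r ^ α := rpow_lt_rpow (by positivity) ((le_max_right _ _).trans_lt hr) hα⟩
  rcases lt_or_gt_of_ne hβ1 with hβ1 | hβ1
  · set C := β ^ 2 / (1 - β) * η ^ β with hCdef
    have h1β : 0 < 1 - β := by linarith
    have hC : 0 ≤ C := by positivity
    refine ⟨0, C * α, C * |Real.log η|, le_rfl, by positivity, by positivity, fun r hr => ?_⟩
    obtain ⟨hr1, hR⟩ := hthreshold r hr
    have hr0 : 0 < r := zero_lt_one.trans hr1
    rw [hscale r hr0]
    calc _ ≤ β ^ 2 / (1 - β) * (r ^ α / η) ^ (-β) * Real.log (r ^ α / η) :=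
          integral_pareto_prod_truncated_le_of_lt_one hβ.le hβ1 hR.le
      _ = C * α * r ^ (-(α * β)) * Real.log r - C * Real.log η * r ^ (-(α * β)) := by
          rw [div_rpow (rpow_nonneg hr0.le α) hη.le, ← rpow_mul hr0.le, rpow_neg hη.le,
            Real.log_div (rpow_pos_of_pos hr0 α).ne' hη.ne', Real.log_rpow hr0, div_inv_eq_mul,
            hCdef]
          ring_nf
      _ ≤ _ := by
          have := mul_le_mul_of_nonneg_left (neg_le_abs (Real.log η))
            (mul_nonneg hC (rpow_nonneg hr0.le (-(α * β))))
          nlinarith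
  · refine ⟨η * (β / (β - 1)) ^ 2, 0, 0, by positivity, le_rfl, le_rfl, fun r hr => ?_⟩
    have hr0 : 0 < r := zero_lt_one.trans (hthreshold r hr).1
    rw [hscale r hr0]
    refine (integral_pareto_prod_truncated_le_of_one_lt hβ1 (by positivity)).trans_eq ?_
    rw [rpow_neg hr0.le]
    field_simp
    ring
end

section
/- Let β > 0, α > 0 and η > 0. Then there exist constants c₄, c₅ ≥ 0 (depending only on α, β, η) such that for every real r > max(1, η^{1/α}), P( W₁ W₂ ≥ r^α / η ) ≤ c₄ r^{−αβ} + c₅ r^{−αβ} log r. -/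
open MeasureTheory Set Real
open scoped ENNReal

lemma pareto_eq_paretoMeasure (β : ℝ) : pareto β = ProbabilityTheory.paretoMeasure 1 β := by
  unfold pareto ProbabilityTheory.paretoMeasure
  congr 1
  funext x
  rw [ProbabilityTheory.paretoPDF_eq]
  by_cases hx : (1 : ℝ) ≤ x
  · simp [hx, neg_add_eq_sub]
  · simp [hx]

lemma isProbabilityMeasure_pareto {β : ℝ} (hβ : 0 < β) : IsProbabilityMeasure (pareto β) := by
  rw [pareto_eq_paretoMeasure]
  exact ProbabilityTheory.isProbabilityMeasure_paretoMeasure one_pos hβ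

lemma lintegral_pareto (β : ℝ) {f : ℝ → ℝ≥0∞} (hf : Measurable f) :
    ∫⁻ x, f x ∂pareto β = ∫⁻ x in Ici 1, ENNReal.ofReal (β * x ^ (-β - 1)) * f x := by
  have hdens : Measurable fun x : ℝ => ENNReal.ofReal (β * x ^ (-β - 1)) := by fun_prop
  rw [pareto, lintegral_withDensity_eq_lintegral_mul _ (hdens.indicator measurableSet_Ici) hf,
    ← lintegral_indicator measurableSet_Ici]
  simp only [Pi.mul_apply, indicator_mul_left]

lemma lintegral_Ioi_ofReal_mul_rpow_neg_sub_one {β a : ℝ} (hβ : 0 < β) (ha : 0 < a) :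
    ∫⁻ x in Ioi a, ENNReal.ofReal (β * x ^ (-β - 1)) = ENNReal.ofReal (a ^ (-β)) := by
  have hint : IntegrableOn (fun x : ℝ => β * x ^ (-β - 1)) (Ioi a) :=
    (integrableOn_Ioi_rpow_of_lt (by linarith) ha).const_mul β
  have hnonneg : 0 ≤ᵐ[volume.restrict (Ioi a)] fun x : ℝ => β * x ^ (-β - 1) := by
    filter_upwards [ae_restrict_mem measurableSet_Ioi] with x hx
    have : 0 < x := ha.trans hx
    positivity
  rw [← ofReal_integral_eq_lintegral_ofReal hint hnonneg, integral_const_mul,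
    integral_Ioi_rpow_of_lt (by linarith) ha, sub_add_cancel]
  congr 1
  field_simp

lemma lintegral_Ioc_ofReal_inv {a b : ℝ} (ha : 0 < a) (hab : a ≤ b) :
    ∫⁻ x in Ioc a b, ENNReal.ofReal x⁻¹ = ENNReal.ofReal (log (b / a)) := by
  have hint : IntegrableOn (fun x : ℝ => x⁻¹) (Ioc a b) :=
    (intervalIntegrable_iff_integrableOn_Ioc_of_le hab).1
      (intervalIntegral.intervalIntegrable_inv (fun x hx => ?_) continuousOn_id)
  · have hnonneg : 0 ≤ᵐ[volume.restrict (Ioc a b)] fun x : ℝ => x⁻¹ := by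
      filter_upwards [ae_restrict_mem measurableSet_Ioc] with x hx
      exact inv_nonneg.2 (ha.trans hx.1).le
    rw [← ofReal_integral_eq_lintegral_ofReal hint hnonneg, ← intervalIntegral.integral_of_le hab,
      integral_inv_of_pos ha (ha.trans_le hab)]
  · rw [uIcc_of_le hab] at hx
    exact (ha.trans_le hx.1).ne'

lemma pareto_Ici {β a : ℝ} (hβ : 0 < β) (ha : 1 ≤ a) :
    pareto β (Ici a) = ENNReal.ofReal (a ^ (-β)) := by
  rw [pareto, withDensity_apply _ measurableSet_Ici, Measure.restrict_congr_set Ioi_ae_eq_Ici.symm,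
    ← lintegral_Ioi_ofReal_mul_rpow_neg_sub_one hβ (one_pos.trans_le ha)]
  exact setLIntegral_congr_fun measurableSet_Ioi fun x hx =>
    indicator_of_mem (mem_Ici.2 (ha.trans (le_of_lt hx))) _

lemma pareto_Ici_of_le_one {β a : ℝ} (hβ : 0 < β) (ha : a ≤ 1) : pareto β (Ici a) = 1 := by
  have := isProbabilityMeasure_pareto hβ
  refine le_antisymm prob_le_one ?_
  calc 1 = pareto β (Ici 1) := by rw [pareto_Ici hβ le_rfl, one_rpow, ENNReal.ofReal_one]
    _ ≤ pareto β (Ici a) := measure_mono (Ici_subset_Ici.2 ha)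

lemma lintegral_Ico_mul_pareto_Ici_div {β t : ℝ} (hβ : 0 < β) (ht : 1 ≤ t) :
    ∫⁻ x in Ico 1 t, ENNReal.ofReal (β * x ^ (-β - 1)) * pareto β (Ici (t / x)) =
      ENNReal.ofReal (β * t ^ (-β) * log t) := by
  have hpoint : ∀ x ∈ Ico 1 t, ENNReal.ofReal (β * x ^ (-β - 1)) * pareto β (Ici (t / x)) =
      ENNReal.ofReal (β * t ^ (-β)) * ENNReal.ofReal x⁻¹ := by
    rintro x ⟨hx1, hxt⟩
    have hx0 : 0 < x := one_pos.trans_le hx1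
    rw [pareto_Ici hβ ((one_le_div hx0).2 hxt.le), ← ENNReal.ofReal_mul (by positivity),
      ← ENNReal.ofReal_mul (by positivity), div_rpow (by positivity) hx0.le,
      rpow_sub_one hx0.ne']
    congr 1
    field_simp
  rw [setLIntegral_congr_fun measurableSet_Ico hpoint, lintegral_const_mul _ (by fun_prop),
    Measure.restrict_congr_set Ico_ae_eq_Ioc, lintegral_Ioc_ofReal_inv one_pos ht, div_one,
    ← ENNReal.ofReal_mul (by positivity)]

lemma lintegral_Ici_mul_pareto_Ici_div {β t : ℝ} (hβ : 0 < β) (ht : 0 < t) :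
    ∫⁻ x in Ici t, ENNReal.ofReal (β * x ^ (-β - 1)) * pareto β (Ici (t / x)) =
      ENNReal.ofReal (t ^ (-β)) := by
  have hpoint : ∀ x ∈ Ici t, ENNReal.ofReal (β * x ^ (-β - 1)) * pareto β (Ici (t / x)) =
      ENNReal.ofReal (β * x ^ (-β - 1)) := fun x hx => by
    rw [pareto_Ici_of_le_one hβ ((div_le_one (ht.trans_le hx)).2 hx), mul_one]
  rw [setLIntegral_congr_fun measurableSet_Ici hpoint,
    Measure.restrict_congr_set Ioi_ae_eq_Ici.symm, lintegral_Ioi_ofReal_mul_rpow_neg_sub_one hβ ht]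

lemma pareto_prod_setOf_le_mul {β t : ℝ} (hβ : 0 < β) (ht : 1 ≤ t) :
    (pareto β).prod (pareto β) {p : ℝ × ℝ | t ≤ p.1 * p.2} =
      ENNReal.ofReal (t ^ (-β) * (1 + β * log t)) := by
  have := isProbabilityMeasure_pareto hβ
  have hS : MeasurableSet {p : ℝ × ℝ | t ≤ p.1 * p.2} :=
    measurableSet_le measurable_const (measurable_fst.mul measurable_snd)
  have hslice : ∀ x ∈ Ici (1 : ℝ), ENNReal.ofReal (β * x ^ (-β - 1)) *
      pareto β (Prod.mk x ⁻¹' {p : ℝ × ℝ | t ≤ p.1 * p.2}) =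
        ENNReal.ofReal (β * x ^ (-β - 1)) * pareto β (Ici (t / x)) := by
    intro x hx
    have hx0 : 0 < x := one_pos.trans_le hx
    congr 2
    ext y
    simp only [mem_preimage, mem_ofPred_eq, mem_Ici, div_le_iff₀ hx0, mul_comm]
  rw [Measure.prod_apply hS, lintegral_pareto β (measurable_measure_prodMk_left hS),
    setLIntegral_congr_fun measurableSet_Ici hslice, ← Ico_union_Ici_eq_Ici ht,
    lintegral_union measurableSet_Ici ((Iio_disjoint_Ici le_rfl).mono_left Ico_subset_Iio_self),
    lintegral_Ico_mul_pareto_Ici_div hβ ht,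
    lintegral_Ici_mul_pareto_Ici_div hβ (one_pos.trans_le ht),
    ← ENNReal.ofReal_add (mul_nonneg (by positivity) (log_nonneg ht)) (by positivity)]
  ring_nf

/-- For `β > 0`, `α > 0`, `η > 0`, there are constants `c₄, c₅ ≥ 0`
such that for every `r > max(1, η^{1/α})`,
`P(W₁W₂ ≥ r^α/η) ≤ c₄ r^{−αβ} + c₅ r^{−αβ} log r`,
where `W₁, W₂` are independent Pareto(β) random variables. -/
theorem stmt10 (β α η : ℝ) (hβ : 0 < β) (hα : 0 < α) (hη : 0 < η) :
    ∃ c₄ c₅ : ℝ, 0 ≤ c₄ ∧ 0 ≤ c₅ ∧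
      ∀ r : ℝ, max 1 (η ^ (1 / α)) < r →
        ((pareto β).prod (pareto β)) {p : ℝ × ℝ | r ^ α / η ≤ p.1 * p.2} ≤
          ENNReal.ofReal (c₄ * r ^ (-(α * β)) + c₅ * r ^ (-(α * β)) * Real.log r) := by
  refine ⟨η ^ β * (1 + β * |log η|), η ^ β * (β * α), by positivity, by positivity, fun r hr => ?_⟩
  have hr0 : 0 < r := one_pos.trans_le ((le_max_left _ _).trans hr.le)
  have ht : 1 ≤ r ^ α / η := by
    rw [one_le_div hη]
    calc η = (η ^ (1 / α)) ^ α := by rw [← rpow_mul hη.le, one_div_mul_cancel hα.ne', rpow_one]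
      _ ≤ r ^ α := rpow_le_rpow (by positivity) ((le_max_right _ _).trans hr.le) hα.le
  have hpow : (r ^ α / η) ^ (-β) = η ^ β * r ^ (-(α * β)) := by
    rw [div_rpow (by positivity) hη.le, ← rpow_mul hr0.le, rpow_neg hη.le, div_inv_eq_mul,
      mul_neg, mul_comm]
  have hlog : log (r ^ α / η) = α * log r - log η := by
    rw [log_div (by positivity) hη.ne', log_rpow hr0]
  rw [pareto_prod_setOf_le_mul hβ ht, hpow, hlog]
  refine ENNReal.ofReal_le_ofReal ?_
  have hc : 0 ≤ η ^ β * r ^ (-(α * β)) * β := by positivity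
  nlinarith [mul_le_mul_of_nonneg_left (neg_le_abs (log η)) hc]
end

section
/- Let C₁ > 4 and let a : [1,∞) → ℝ be any function satisfying 0 ≤ a(s) ≤ s/4 for every s ≥ 1. Suppose s′ ≥ 1 satisfies a(s′) ≥ s′/C₁. Then there exists an integer k with 1 ≤ k ≤ ⌊ log(C₁/4) / log(4/3) ⌋ + 1 such that a( (3/2)^k s′ ) ≤ 2 · a( (3/2)^{k−1} s′ ). Consequently, setting C₁′ := (3/2)^{⌊ log(C₁/4)/log(4/3) ⌋ + 1}, there exists s₂ ∈ [s′, C₁′ s′] with a(s₂) ≤ 2 · a( (2/3) s₂ ). -/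
open Real

/-- Let `C₁ > 4` and let `a : [1,∞) → ℝ` satisfy `0 ≤ a(s) ≤ s/4`
for every `s ≥ 1`. If `s′ ≥ 1` satisfies `a(s′) ≥ s′/C₁`, then there is an integer
`1 ≤ k ≤ ⌊log(C₁/4)/log(4/3)⌋ + 1` with `a((3/2)^k s′) ≤ 2 a((3/2)^{k−1} s′)`;
consequently, with `C₁′ := (3/2)^{⌊log(C₁/4)/log(4/3)⌋ + 1}`, there exists
`s₂ ∈ [s′, C₁′ s′]` with `a(s₂) ≤ 2 a((2/3) s₂)`. -/
theorem stmt11 (C₁ : ℝ) (hC₁ : 4 < C₁) (a : ℝ → ℝ)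
    (ha₀ : ∀ s : ℝ, 1 ≤ s → 0 ≤ a s) (ha₁ : ∀ s : ℝ, 1 ≤ s → a s ≤ s / 4)
    (s' : ℝ) (hs' : 1 ≤ s') (h : s' / C₁ ≤ a s') :
    (∃ k : ℕ, 1 ≤ k ∧ k ≤ ⌊Real.log (C₁ / 4) / Real.log (4 / 3)⌋₊ + 1 ∧
        a ((3 / 2 : ℝ) ^ k * s') ≤ 2 * a ((3 / 2 : ℝ) ^ (k - 1) * s')) ∧
      ∃ s₂ ∈ Set.Icc s'
          ((3 / 2 : ℝ) ^ (⌊Real.log (C₁ / 4) / Real.log (4 / 3)⌋₊ + 1) * s'),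
        a s₂ ≤ 2 * a ((2 / 3) * s₂) := by
  set N := ⌊Real.log (C₁ / 4) / Real.log (4 / 3)⌋₊ with hN
  have hpow1 : ∀ k : ℕ, (1:ℝ) ≤ (3/2:ℝ)^k * s' := by
    intro k
    have h1 : (1:ℝ) ≤ (3/2:ℝ)^k := one_le_pow₀ (by norm_num)
    nlinarith
  have hkey : ∃ k : ℕ, 1 ≤ k ∧ k ≤ N + 1 ∧
      a ((3/2:ℝ)^k * s') ≤ 2 * a ((3/2:ℝ)^(k-1) * s') := by
    by_contra hcon
    push_neg at hcon
    have hgrow : ∀ k : ℕ, k ≤ N + 1 → (2:ℝ)^k * a s' ≤ a ((3/2:ℝ)^k * s') := by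
      intro k hk
      induction k with
      | zero => simp
      | succ n ih =>
        have ih' := ih (le_trans (Nat.le_succ n) hk)
        have h1 := hcon (n+1) (Nat.succ_le_succ (Nat.zero_le n)) hk
        simp only [Nat.add_sub_cancel] at h1
        have : (2:ℝ)^(n+1) * a s' = 2 * ((2:ℝ)^n * a s') := by ring
        rw [this]
        nlinarith
    have hNfin := hgrow (N+1) le_rfl
    have hub := ha₁ ((3/2:ℝ)^(N+1) * s') (hpow1 (N+1))
    have hC₁0 : (0:ℝ) < C₁ := by linarith
    have hs'0 : (0:ℝ) < s' := by linarith
    have hmain : (2:ℝ)^(N+1) * (s' / C₁) ≤ (3/2:ℝ)^(N+1) * s' / 4 := by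
      have h2 : (2:ℝ)^(N+1) * (s' / C₁) ≤ (2:ℝ)^(N+1) * a s' := by
        have : (0:ℝ) ≤ (2:ℝ)^(N+1) := by positivity
        nlinarith
      linarith
    -- deduce (4/3)^(N+1) ≤ C₁/4
    have hratio : ((4:ℝ)/3)^(N+1) ≤ C₁ / 4 := by
      have hp2 : (0:ℝ) < (2:ℝ)^(N+1) := by positivity
      have hp32 : (0:ℝ) < (3/2:ℝ)^(N+1) := by positivity
      have key : (2:ℝ)^(N+1) * 4 ≤ (3/2:ℝ)^(N+1) * C₁ := by
        have hmul := mul_le_mul_of_nonneg_right hmain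
          (show (0:ℝ) ≤ 4 * C₁ by linarith)
        have e1 : (2:ℝ)^(N+1) * (s'/C₁) * (4*C₁) = (2:ℝ)^(N+1) * 4 * s' := by
          field_simp
        have e2 : (3/2:ℝ)^(N+1) * s' / 4 * (4*C₁) = (3/2:ℝ)^(N+1) * C₁ * s' := by
          field_simp
        rw [e1, e2] at hmul
        exact le_of_mul_le_mul_right hmul hs'0
      have h43 : ((4:ℝ)/3)^(N+1) = (2:ℝ)^(N+1) / (3/2:ℝ)^(N+1) := by
        rw [← div_pow]; norm_num
      rw [h43, div_le_div_iff₀ hp32 (by norm_num)]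
      linarith
    have hlog : ((N:ℝ)+1) * Real.log (4/3) ≤ Real.log (C₁ / 4) := by
      have := Real.log_le_log (by positivity) hratio
      rwa [Real.log_pow, Nat.cast_add, Nat.cast_one] at this
    have hlog43 : (0:ℝ) < Real.log (4/3) := Real.log_pos (by norm_num)
    have hfl : ((N:ℝ)+1) ≤ Real.log (C₁ / 4) / Real.log (4/3) :=
      (le_div_iff₀ hlog43).mpr hlog
    have : N + 1 ≤ N := by
      rw [hN]
      exact Nat.le_floor (by push_cast; exact hfl)
    omega
  refine ⟨hkey, ?_⟩
  obtain ⟨k, hk1, hk2, hka⟩ := hkey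
  refine ⟨(3/2:ℝ)^k * s', ⟨?_, ?_⟩, ?_⟩
  · have h1 : (1:ℝ) ≤ (3/2:ℝ)^k := one_le_pow₀ (by norm_num)
    nlinarith [hs']
  · have h1 : (3/2:ℝ)^k ≤ (3/2:ℝ)^(N+1) := pow_le_pow_right₀ (by norm_num) hk2
    have hs'0 : (0:ℝ) ≤ s' := by linarith
    nlinarith
  · obtain ⟨m, rfl⟩ := Nat.exists_eq_add_of_le hk1
    have : (2/3:ℝ) * ((3/2:ℝ)^(1+m) * s') = (3/2:ℝ)^(1+m-1) * s' := by
      simp only [Nat.add_sub_cancel_left, pow_add]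
      ring
    rw [this]
    exact hka
end
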